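/- arXiv:1111.3885 — 10 statements merged into one kernel-verified Lean document; each statement's English description precedes it below -/
import Mathlib

section
/- Let 𝒳 be a family of real-valued random variables on a probability space (Ω, F, P). Then 𝒳 is bounded in probability if and only if there exists a nondecreasing unbounded function U : [0,∞) → [0,∞) such that sup_{X ∈ 𝒳} E[U(|X|)] < ∞. Moreover, when 𝒳 is bounded in probability, the function U can be chosen to be concave and to satisfy U(0) = 0. -/
/-!
If `E U(|X|) ≤ S` for all `X ∈ 𝒳`, Markov's inequality gives `P(|X| ≥ M) ≤ S / U(M)`, which
tends to `0` because `U` is nondecreasing and unbounded.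

Conversely, choose scales `b n ≥ 1` beyond which every `X ∈ 𝒳` has tail probability at most
`2⁻ⁿ`, and put `U x = ∑ₙ min (x / (2ⁿ b n)) 1`. Each summand is concave, nondecreasing, zero
at `0` and eventually `1`, so `U` is concave and unbounded, while
`E min (|X| / (2ⁿ b n)) 1 ≤ P(|X| ≥ b n) + 2⁻ⁿ` bounds `E U(|X|)` by `4` uniformly in `X`.
-/

open MeasureTheory Filter Set
open scoped ENNReal Topology

theorem tendsto_atTop_of_monotoneOn_Ici {U : ℝ → ℝ} (hmono : MonotoneOn U (Ici 0))
    (hunb : ∀ C : ℝ, ∃ x, 0 ≤ x ∧ C ≤ U x) : Tendsto U atTop atTop := by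
  refine tendsto_atTop.2 fun C => ?_
  obtain ⟨x, hx, hC⟩ := hunb C
  filter_upwards [eventually_ge_atTop x] with M hM
  exact hC.trans (hmono hx (hx.trans hM) hM)

section Markov

variable {Ω : Type*} [MeasurableSpace Ω] {μ : Measure Ω}

theorem ofReal_mul_meas_abs_ge_le_lintegral {X : Ω → ℝ} (hX : Measurable X) {U : ℝ → ℝ}
    (hmono : MonotoneOn U (Ici 0)) {M : ℝ} (hM : 0 ≤ M) :
    ENNReal.ofReal (U M) * μ {ω | M ≤ |X ω|} ≤ ∫⁻ ω, ENNReal.ofReal (U |X ω|) ∂μ := by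
  rw [← lintegral_indicator_const (measurableSet_le measurable_const hX.abs)]
  exact lintegral_mono <| indicator_le fun ω hω =>
    ENNReal.ofReal_le_ofReal (hmono hM (hM.trans hω) hω)

theorem tendsto_iSup_meas_abs_ge_of_iSup_lintegral_lt_top {𝒳 : Set (Ω → ℝ)}
    (h𝒳 : ∀ X ∈ 𝒳, Measurable X) {U : ℝ → ℝ} (hmono : MonotoneOn U (Ici 0))
    (hunb : ∀ C : ℝ, ∃ x, 0 ≤ x ∧ C ≤ U x)
    (hfin : (⨆ X ∈ 𝒳, ∫⁻ ω, ENNReal.ofReal (U |X ω|) ∂μ) < ⊤) :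
    Tendsto (fun M : ℝ => ⨆ X ∈ 𝒳, μ {ω | M ≤ |X ω|}) atTop (𝓝 0) := by
  set S := ⨆ X ∈ 𝒳, ∫⁻ ω, ENNReal.ofReal (U |X ω|) ∂μ
  have hU := tendsto_atTop_of_monotoneOn_Ici hmono hunb
  have hbound : Tendsto (fun M => S / ENNReal.ofReal (U M)) atTop (𝓝 0) := by
    have hinv : Tendsto (fun M => (ENNReal.ofReal (U M))⁻¹) atTop (𝓝 0) := by
      simpa using (ENNReal.tendsto_ofReal_atTop.comp hU).inv
    simpa [div_eq_mul_inv] using ENNReal.Tendsto.const_mul hinv (Or.inr hfin.ne)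
  refine tendsto_of_tendsto_of_tendsto_of_le_of_le' tendsto_const_nhds hbound
    (Eventually.of_forall fun _ => zero_le) ?_
  filter_upwards [eventually_ge_atTop 0, hU.eventually_gt_atTop 0] with M hM hUM
  refine iSup₂_le fun X hX => ?_
  rw [ENNReal.le_div_iff_mul_le (Or.inl (by simpa using hUM)) (Or.inl ENNReal.ofReal_ne_top),
    mul_comm]
  exact (ofReal_mul_meas_abs_ge_le_lintegral (h𝒳 X hX) hmono hM).trans
    (le_iSup₂ (f := fun X _ => ∫⁻ ω, ENNReal.ofReal (U |X ω|) ∂μ) X hX)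

end Markov

theorem ConcaveOn.tsum {ι E : Type*} [AddCommMonoid E] [Module ℝ E] {s : Set E}
    {f : ι → E → ℝ} (hs : Convex ℝ s) (hf : ∀ i, ConcaveOn ℝ s (f i))
    (hsum : ∀ x ∈ s, Summable fun i => f i x) : ConcaveOn ℝ s fun x => ∑' i, f i x := by
  refine ⟨hs, fun x hx y hy a b ha hb hab => ?_⟩
  simp only [smul_eq_mul]
  calc a * ∑' i, f i x + b * ∑' i, f i y = ∑' i, (a * f i x + b * f i y) := by
        rw [((hsum x hx).mul_left a).tsum_add ((hsum y hy).mul_left b), tsum_mul_left,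
          tsum_mul_left]
    _ ≤ ∑' i, f i (a • x + b • y) :=
        (((hsum x hx).mul_left a).add ((hsum y hy).mul_left b)).tsum_le_tsum
          (fun i => (hf i).2 hx hy ha hb hab) (hsum _ (hs hx hy ha hb hab))

theorem concaveOn_min_div_one {c : ℝ} (hc : 0 ≤ c) : ConcaveOn ℝ univ fun x : ℝ => min (x / c) 1 := by
  refine ConcaveOn.inf (f := fun x : ℝ => x / c) ?_ (concaveOn_const _ convex_univ)
  simpa [div_eq_mul_inv, mul_comm] using (concaveOn_id (convex_univ (𝕜 := ℝ) (E := ℝ))).smul (inv_nonneg.2 hc)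


noncomputable def sumMinRatio (a : ℕ → ℝ) (x : ℝ) : ℝ := ∑' n, min (x / a n) 1

section sumMinRatio

variable {a : ℕ → ℝ}

theorem summable_min_div_one (ha : ∀ n, 0 < a n) (hs : Summable fun n => (a n)⁻¹) {x : ℝ}
    (hx : 0 ≤ x) : Summable fun n => min (x / a n) 1 :=
  (hs.mul_left x).of_nonneg_of_le (fun n => le_min (div_nonneg hx (ha n).le) zero_le_one)
    fun _ => (min_le_left _ _).trans_eq (div_eq_mul_inv _ _)

theorem sumMinRatio_nonneg (ha : ∀ n, 0 < a n) {x : ℝ} (hx : 0 ≤ x) : 0 ≤ sumMinRatio a x :=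
  tsum_nonneg fun n => le_min (div_nonneg hx (ha n).le) zero_le_one

@[simp]
theorem sumMinRatio_zero : sumMinRatio a 0 = 0 := by
  simp [sumMinRatio]

theorem monotoneOn_sumMinRatio (ha : ∀ n, 0 < a n) (hs : Summable fun n => (a n)⁻¹) :
    MonotoneOn (sumMinRatio a) (Ici 0) := fun _ hx _ hy hxy =>
  (summable_min_div_one ha hs hx).tsum_le_tsum
    (fun n => min_le_min_right 1 (div_le_div_of_nonneg_right hxy (ha n).le))
    (summable_min_div_one ha hs hy)

theorem concaveOn_sumMinRatio (ha : ∀ n, 0 < a n) (hs : Summable fun n => (a n)⁻¹) :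
    ConcaveOn ℝ (Ici 0) (sumMinRatio a) :=
  ConcaveOn.tsum (convex_Ici 0) (fun n => (concaveOn_min_div_one (ha n).le).subset
    (subset_univ _) (convex_Ici 0)) fun _ hx => summable_min_div_one ha hs hx

theorem exists_le_sumMinRatio (ha : ∀ n, 0 < a n) (hs : Summable fun n => (a n)⁻¹) (C : ℝ) :
    ∃ x, 0 ≤ x ∧ C ≤ sumMinRatio a x := by
  obtain ⟨N, hN⟩ := exists_nat_ge C
  set x := ∑ n ∈ Finset.range N, a n
  have hx : 0 ≤ x := Finset.sum_nonneg fun n _ => (ha n).le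
  have hterm : ∀ n ∈ Finset.range N, min (x / a n) 1 = 1 := fun n hn =>
    min_eq_right ((one_le_div (ha n)).2 (Finset.single_le_sum (fun k _ => (ha k).le) hn))
  refine ⟨x, hx, ?_⟩
  calc C ≤ N := hN
    _ = ∑ n ∈ Finset.range N, min (x / a n) 1 := by simp [Finset.sum_congr rfl hterm]
    _ ≤ sumMinRatio a x := (summable_min_div_one ha hs hx).sum_le_tsum _
        fun n _ => le_min (div_nonneg hx (ha n).le) zero_le_one

variable {Ω : Type*} [MeasurableSpace Ω] {μ : Measure Ω} [IsProbabilityMeasure μ]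

theorem lintegral_min_div_one_le {Y : Ω → ℝ} (hY : Measurable Y) {c : ℝ} (hc : 0 < c) (b : ℝ) :
    ∫⁻ ω, ENNReal.ofReal (min (Y ω / c) 1) ∂μ ≤ μ {ω | b ≤ Y ω} + ENNReal.ofReal (b / c) := by
  have hpt : ∀ ω, ENNReal.ofReal (min (Y ω / c) 1) ≤
      {ω | b ≤ Y ω}.indicator 1 ω + ENNReal.ofReal (b / c) := by
    intro ω
    by_cases hω : b ≤ Y ω
    · rw [indicator_of_mem (s := {ω | b ≤ Y ω}) hω]
      exact le_add_right (ENNReal.ofReal_le_one.2 (min_le_right _ _))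
    · rw [indicator_of_notMem (s := {ω | b ≤ Y ω}) hω, zero_add]
      exact ENNReal.ofReal_le_ofReal
        ((min_le_left _ _).trans (div_le_div_of_nonneg_right (not_le.1 hω).le hc.le))
  calc _ ≤ ∫⁻ ω, ({ω | b ≤ Y ω}.indicator 1 ω + ENNReal.ofReal (b / c)) ∂μ := lintegral_mono hpt
    _ = μ {ω | b ≤ Y ω} + ENNReal.ofReal (b / c) := by
      rw [lintegral_add_right _ measurable_const,
        lintegral_indicator_one (measurableSet_le measurable_const hY), lintegral_const,
        measure_univ, mul_one]

theorem lintegral_sumMinRatio_abs_le (ha : ∀ n, 0 < a n) (hs : Summable fun n => (a n)⁻¹)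
    {X : Ω → ℝ} (hX : Measurable X) (b : ℕ → ℝ) :
    ∫⁻ ω, ENNReal.ofReal (sumMinRatio a |X ω|) ∂μ ≤
      ∑' n, (μ {ω | b n ≤ |X ω|} + ENNReal.ofReal (b n / a n)) :=
  calc ∫⁻ ω, ENNReal.ofReal (sumMinRatio a |X ω|) ∂μ
      = ∫⁻ ω, ∑' n, ENNReal.ofReal (min (|X ω| / a n) 1) ∂μ :=
        lintegral_congr fun _ => ENNReal.ofReal_tsum_of_nonneg
          (fun n => le_min (div_nonneg (abs_nonneg _) (ha n).le) zero_le_one)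
          (summable_min_div_one ha hs (abs_nonneg _))
    _ = ∑' n, ∫⁻ ω, ENNReal.ofReal (min (|X ω| / a n) 1) ∂μ :=
        lintegral_tsum fun _ =>
          ((hX.abs.div_const _).min measurable_const).ennreal_ofReal.aemeasurable
    _ ≤ _ := ENNReal.tsum_le_tsum fun n => lintegral_min_div_one_le hX.abs (ha n) (b n)

end sumMinRatio

theorem exists_concave_gauge_of_tendsto {Ω : Type*} [MeasurableSpace Ω] (P : Measure Ω)
    [IsProbabilityMeasure P] (𝒳 : Set (Ω → ℝ)) (h𝒳 : ∀ X ∈ 𝒳, Measurable X)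
    (h : Tendsto (fun M : ℝ => ⨆ X ∈ 𝒳, P {ω | M ≤ |X ω|}) atTop (𝓝 0)) :
    ∃ U : ℝ → ℝ, MonotoneOn U (Ici 0) ∧ (∀ x ∈ Ici (0 : ℝ), 0 ≤ U x) ∧
      (∀ C : ℝ, ∃ x, 0 ≤ x ∧ C ≤ U x) ∧
      (⨆ X ∈ 𝒳, ∫⁻ ω, ENNReal.ofReal (U |X ω|) ∂P) < ⊤ ∧
      ConcaveOn ℝ (Ici 0) U ∧ U 0 = 0 := by
  choose b hb using fun n : ℕ =>
    ((h.eventually_le_const (ENNReal.pow_pos (by simp) n : (0 : ℝ≥0∞) < 2⁻¹ ^ n)).and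
      (eventually_ge_atTop 1)).exists
  set a : ℕ → ℝ := fun n => 2 ^ n * b n
  have hb0 : ∀ n, 0 < b n := fun n => one_pos.trans_le (hb n).2
  have ha : ∀ n, 0 < a n := fun n => mul_pos (by positivity) (hb0 n)
  have hs : Summable fun n => (a n)⁻¹ := by
    refine (summable_geometric_two).of_nonneg_of_le (fun n => (inv_pos.2 (ha n)).le) fun n => ?_
    rw [one_div, inv_pow]
    exact inv_anti₀ (by positivity) (le_mul_of_one_le_right (by positivity) (hb n).2)
  have hratio : ∀ n, ENNReal.ofReal (b n / a n) = 2⁻¹ ^ n := fun n => by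
    simp [a, div_mul_cancel_right₀ (hb0 n).ne', ENNReal.ofReal_inv_of_pos, ENNReal.ofReal_pow,
      ENNReal.inv_pow]
  have hint : ∀ X ∈ 𝒳, ∫⁻ ω, ENNReal.ofReal (sumMinRatio a |X ω|) ∂P ≤ 2 + 2 := fun X hX =>
    calc ∫⁻ ω, ENNReal.ofReal (sumMinRatio a |X ω|) ∂P
        ≤ ∑' n, (P {ω | b n ≤ |X ω|} + ENNReal.ofReal (b n / a n)) :=
          lintegral_sumMinRatio_abs_le ha hs (h𝒳 X hX) b
      _ ≤ ∑' n : ℕ, ((2⁻¹ : ℝ≥0∞) ^ n + 2⁻¹ ^ n) := ENNReal.tsum_le_tsum fun n =>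
          add_le_add ((le_iSup₂ (f := fun X _ => P {ω | b n ≤ |X ω|}) X hX).trans (hb n).1)
            (hratio n).le
      _ = 2 + 2 := by simp [ENNReal.tsum_add, ENNReal.tsum_geometric, ENNReal.one_sub_inv_two]
  exact ⟨sumMinRatio a, monotoneOn_sumMinRatio ha hs, fun _ hx => sumMinRatio_nonneg ha hx,
    exists_le_sumMinRatio ha hs, (iSup₂_le hint).trans_lt (by simp),
    concaveOn_sumMinRatio ha hs, sumMinRatio_zero⟩

/-- A family `𝒳` of real-valued random variables is bounded in probability
if and only if there is a nondecreasing unbounded function `U : [0,∞) → [0,∞)` with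
`sup_{X ∈ 𝒳} E[U(|X|)] < ∞`; moreover, if `𝒳` is bounded in probability, `U` can be chosen
concave with `U 0 = 0`. -/
theorem statement0 {Ω : Type*} [MeasurableSpace Ω] (P : Measure Ω) [IsProbabilityMeasure P]
    (𝒳 : Set (Ω → ℝ)) (h𝒳 : ∀ X ∈ 𝒳, Measurable X) :
    (Tendsto (fun M : ℝ => ⨆ X ∈ 𝒳, P {ω | M ≤ |X ω|}) atTop (𝓝 0) ↔
      ∃ U : ℝ → ℝ, MonotoneOn U (Ici 0) ∧ (∀ x ∈ Ici (0 : ℝ), 0 ≤ U x) ∧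
        (∀ C : ℝ, ∃ x, 0 ≤ x ∧ C ≤ U x) ∧
        (⨆ X ∈ 𝒳, ∫⁻ ω, ENNReal.ofReal (U |X ω|) ∂P) < ⊤) ∧
    (Tendsto (fun M : ℝ => ⨆ X ∈ 𝒳, P {ω | M ≤ |X ω|}) atTop (𝓝 0) →
      ∃ U : ℝ → ℝ, MonotoneOn U (Ici 0) ∧ (∀ x ∈ Ici (0 : ℝ), 0 ≤ U x) ∧
        (∀ C : ℝ, ∃ x, 0 ≤ x ∧ C ≤ U x) ∧
        (⨆ X ∈ 𝒳, ∫⁻ ω, ENNReal.ofReal (U |X ω|) ∂P) < ⊤ ∧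
        ConcaveOn ℝ (Ici 0) U ∧ U 0 = 0) := by
  refine ⟨⟨fun h => ?_, fun ⟨U, hmono, _, hunb, hfin⟩ =>
    tendsto_iSup_meas_abs_ge_of_iSup_lintegral_lt_top h𝒳 hmono hunb hfin⟩,
    exists_concave_gauge_of_tendsto P 𝒳 h𝒳⟩
  obtain ⟨U, hmono, hnonneg, hunb, hfin, -⟩ := exists_concave_gauge_of_tendsto P 𝒳 h𝒳 h
  exact ⟨U, hmono, hnonneg, hunb, hfin⟩
end

section
/- Let 𝒳 be a convex family of nonnegative random variables on a probability space (Ω, F, P). Then 𝒳 is bounded in probability if and only if there exists a random variable Z with P(Z > 0) = 1 such that sup_{X ∈ 𝒳} E[X Z] < ∞. -/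
open MeasureTheory Filter Set
open scoped ENNReal NNReal Topology

/-!
Maximise the bounded concave utility `E[u X]`, `u x = 1 - exp (-x)`, over `𝒳`. Uniform tail
bounds and the strict concavity of `u` on `(-∞, K]` force any two near-maximisers to be close in
probability, so a fast maximising sequence converges a.s. (Borel–Cantelli) to some `W ≥ 0`.
By dominated convergence and convexity of `𝒳`, `W` maximises `E[u]` on every segment from `W`
towards a member `X` of `𝒳`; Fatou's lemma applied to the difference quotients gives the
first-order condition `E[exp (-W) (X - W)] ≤ 0`, and with `w exp (-w) ≤ 1` this yields
`E[X exp (-W)] ≤ 1`, so `Z = exp (-W)` works.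
Conversely, `P(X ≥ M) ≤ P(Z < δ) + E[X Z] / (M δ)` by Markov's inequality.
-/

noncomputable def expUtility (x : ℝ) : ℝ := 1 - Real.exp (-x)

lemma continuous_expUtility : Continuous expUtility := by
  unfold expUtility; fun_prop

@[fun_prop]
lemma measurable_expUtility : Measurable expUtility :=
  continuous_expUtility.measurable

lemma expUtility_le_one (x : ℝ) : expUtility x ≤ 1 := by
  have := Real.exp_pos (-x); unfold expUtility; linarith

lemma expUtility_nonneg {x : ℝ} (hx : 0 ≤ x) : 0 ≤ expUtility x := by
  have : Real.exp (-x) ≤ 1 := Real.exp_le_one_iff.mpr (neg_nonpos.mpr hx)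
  unfold expUtility; linarith

lemma abs_expUtility_le_one {x : ℝ} (hx : 0 ≤ x) : |expUtility x| ≤ 1 :=
  abs_le.mpr ⟨by linarith [expUtility_nonneg hx], expUtility_le_one x⟩

lemma concaveOn_expUtility : ConcaveOn ℝ univ expUtility := by
  have h : ConvexOn ℝ univ fun x : ℝ => Real.exp (-x) :=
    convexOn_exp.comp_linearMap (-LinearMap.id)
  exact (neg_concaveOn_iff.mpr h).add_const 1 |>.congr
    fun x _ => by simp [expUtility, sub_eq_add_neg, add_comm]

lemma hasDerivAt_expUtility (x : ℝ) : HasDerivAt expUtility (Real.exp (-x)) x := by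
  have := ((Real.hasDerivAt_exp (-x)).comp x (hasDerivAt_neg x)).const_sub 1
  simp only [Function.comp_def, mul_neg, mul_one, neg_neg] at this
  exact this

lemma two_add_sq_div_two_le_exp_add_exp_neg (d : ℝ) :
    2 + d ^ 2 / 2 ≤ Real.exp d + Real.exp (-d) := by
  rcases le_total 0 d with hd | hd
  · linarith [Real.quadratic_le_exp_of_nonneg hd, Real.add_one_le_exp (-d)]
  · linarith [Real.quadratic_le_exp_of_nonneg (neg_nonneg.mpr hd), Real.add_one_le_exp d]

lemma expUtility_avg_add_sq_le_midpoint {a b K : ℝ} (ha : a ≤ K) (hb : b ≤ K) :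
    (expUtility a + expUtility b) / 2 + Real.exp (-K) * (a - b) ^ 2 / 16 ≤
      expUtility ((a + b) / 2) := by
  set m := (a + b) / 2
  set d := (a - b) / 2
  have hexp : Real.exp (-a) + Real.exp (-b) = Real.exp (-m) * (Real.exp (-d) + Real.exp d) := by
    rw [mul_add, ← Real.exp_add, ← Real.exp_add]
    simp only [m, d]
    ring_nf
  have hKm : Real.exp (-K) ≤ Real.exp (-m) := Real.exp_le_exp.mpr (by simp only [m]; linarith)
  have hd : (a - b) ^ 2 = 4 * d ^ 2 := by ring
  have h1 := mul_le_mul_of_nonneg_left (two_add_sq_div_two_le_exp_add_exp_neg d)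
    (Real.exp_pos (-m)).le
  have h2 := mul_le_mul_of_nonneg_right hKm (sq_nonneg d)
  unfold expUtility
  linear_combination (1 / 2) * h1 + (1 / 4) * h2 - (1 / 2) * hexp + (Real.exp (-K) / 16) * hd

lemma tendsto_slope_expUtility (w d : ℝ) :
    Tendsto (fun t => (expUtility (w + t * d) - expUtility w) / t) (𝓝[≠] 0)
      (𝓝 (Real.exp (-w) * d)) := by
  have h : HasDerivAt (fun t => expUtility (w + t * d)) (Real.exp (-w) * d) 0 := by
    have := (hasDerivAt_expUtility (w + 0 * d)).comp (0 : ℝ)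
      (((hasDerivAt_id (0 : ℝ)).mul_const d).const_add w)
    simpa [Function.comp_def] using this
  simpa [div_eq_inv_mul] using h.tendsto_slope_zero

lemma neg_one_le_slope_expUtility {w x t : ℝ} (hx : 0 ≤ x) (ht0 : 0 < t) (ht1 : t ≤ 1) :
    -1 ≤ (expUtility (w + t * (x - w)) - expUtility w) / t := by
  have hconc := concaveOn_expUtility.2 (mem_univ w) (mem_univ x) (sub_nonneg.mpr ht1) ht0.le
    (sub_add_cancel 1 t)
  have hcomb : (1 - t) • w + t • x = w + t * (x - w) := by simp only [smul_eq_mul]; ring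
  rw [hcomb, smul_eq_mul, smul_eq_mul] at hconc
  rw [le_div_iff₀ ht0]
  nlinarith [expUtility_nonneg hx, expUtility_le_one w]

lemma mul_exp_neg_le_exp_neg_mul_sub_add_one (x w : ℝ) :
    x * Real.exp (-w) ≤ Real.exp (-w) * (x - w) + 1 := by
  have hw : w * Real.exp (-w) ≤ 1 := by
    have := mul_le_mul_of_nonneg_right (Real.add_one_le_exp w) (Real.exp_pos (-w)).le
    rw [← Real.exp_add, add_neg_cancel, Real.exp_zero] at this
    nlinarith [Real.exp_pos (-w)]
  linarith

lemma convex_of_forall_combo_mem {Ω : Type*} {𝒳 : Set (Ω → ℝ)}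
    (h : ∀ X ∈ 𝒳, ∀ Y ∈ 𝒳, ∀ l : ℝ, l ∈ Icc (0 : ℝ) 1 →
      (fun ω => l * X ω + (1 - l) * Y ω) ∈ 𝒳) :
    Convex ℝ 𝒳 := by
  intro X hX Y hY a b ha hb hab
  convert h X hX Y hY a ⟨ha, by linarith⟩ using 1
  ext ω
  simp [← hab]

section Measure

variable {Ω : Type*} [MeasurableSpace Ω] {P : Measure Ω}

lemma exists_measurable_ae_tendsto_of_tsum_measure_ne_top {β : Type*} [MetricSpace β]
    [CompleteSpace β] [MeasurableSpace β] [BorelSpace β] {f : ℕ → Ω → β} {ε : ℕ → ℝ}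
    (hf : ∀ n, AEMeasurable (f n) P) (hε : Summable ε)
    (h : ∑' n, P {ω | ε n ≤ dist (f n ω) (f (n + 1) ω)} ≠ ∞) :
    ∃ g : Ω → β, Measurable g ∧ ∀ᵐ ω ∂P, Tendsto (fun n => f n ω) atTop (𝓝 (g ω)) := by
  refine measurable_limit_of_tendsto_metrizable_ae hf ?_
  filter_upwards [ae_eventually_notMem h] with ω hω
  obtain ⟨N, hN⟩ := eventually_atTop.mp hω
  have hcauchy : CauchySeq fun k => f (k + N) ω := by
    refine cauchySeq_of_dist_le_of_summable (fun k => ε (k + N)) (fun k => ?_)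
      ((summable_nat_add_iff N).mpr hε)
    have := hN (k + N) (Nat.le_add_left N k)
    rw [Nat.succ_add]
    exact (not_le.mp this).le
  obtain ⟨l, hl⟩ := cauchySeq_tendsto_of_complete hcauchy
  exact ⟨l, (tendsto_add_atTop_iff_nat N).mp hl⟩

lemma integrable_expUtility_comp [IsFiniteMeasure P] {V : Ω → ℝ}
    (hV : AEStronglyMeasurable V P) (hV0 : 0 ≤ᵐ[P] V) :
    Integrable (fun ω => expUtility (V ω)) P :=
  (integrable_const (1 : ℝ)).mono' (continuous_expUtility.comp_aestronglyMeasurable hV)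
    (hV0.mono fun _ h => abs_expUtility_le_one h)

lemma tendsto_integral_expUtility_comp [IsFiniteMeasure P] {V : ℕ → Ω → ℝ} {W : Ω → ℝ}
    (hV : ∀ n, AEStronglyMeasurable (V n) P) (hV0 : ∀ n, 0 ≤ᵐ[P] V n)
    (hlim : ∀ᵐ ω ∂P, Tendsto (fun n => V n ω) atTop (𝓝 (W ω))) :
    Tendsto (fun n => ∫ ω, expUtility (V n ω) ∂P) atTop (𝓝 (∫ ω, expUtility (W ω) ∂P)) :=
  tendsto_integral_of_dominated_convergence (fun _ => 1)
    (fun n => continuous_expUtility.comp_aestronglyMeasurable (hV n)) (integrable_const 1)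
    (fun n => (hV0 n).mono fun _ h => abs_expUtility_le_one h)
    (hlim.mono fun _ h => (continuous_expUtility.tendsto _).comp h)

lemma mul_measureReal_le_integral_expUtility_midpoint_sub [IsFiniteMeasure P] {X Y : Ω → ℝ}
    (hX : Measurable X) (hY : Measurable Y) (hX0 : 0 ≤ᵐ[P] X)
    (hY0 : 0 ≤ᵐ[P] Y) {ε : ℝ} (hε : 0 ≤ ε) (K : ℝ) :
    Real.exp (-K) * ε ^ 2 / 16 * P.real {ω | ε ≤ |X ω - Y ω| ∧ X ω ≤ K ∧ Y ω ≤ K} ≤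
      ∫ ω, expUtility ((X ω + Y ω) / 2) ∂P -
        (∫ ω, expUtility (X ω) ∂P + ∫ ω, expUtility (Y ω) ∂P) / 2 := by
  set gap : Ω → ℝ := fun ω =>
    expUtility ((X ω + Y ω) / 2) - (expUtility (X ω) + expUtility (Y ω)) / 2
  have hgap_nonneg : ∀ ω, 0 ≤ gap ω := fun ω => by
    have := expUtility_avg_add_sq_le_midpoint (le_max_left (X ω) (Y ω)) (le_max_right _ _)
    have : 0 ≤ Real.exp (-max (X ω) (Y ω)) * (X ω - Y ω) ^ 2 / 16 := by positivity
    simp only [gap]; linarith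
  have hint_X := integrable_expUtility_comp hX.aestronglyMeasurable hX0
  have hint_Y := integrable_expUtility_comp hY.aestronglyMeasurable hY0
  have hint_mid : Integrable (fun ω => expUtility ((X ω + Y ω) / 2)) P :=
    integrable_expUtility_comp ((hX.add hY).div_const 2).aestronglyMeasurable
      (by filter_upwards [hX0, hY0] with ω hx hy; simp only [Pi.zero_apply] at *; linarith)
  have hint_avg : Integrable (fun ω => (expUtility (X ω) + expUtility (Y ω)) / 2) P :=
    (hint_X.add hint_Y).div_const 2
  have hsub : {ω | ε ≤ |X ω - Y ω| ∧ X ω ≤ K ∧ Y ω ≤ K} ⊆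
      {ω | Real.exp (-K) * ε ^ 2 / 16 ≤ gap ω} := by
    rintro ω ⟨hXY, hXK, hYK⟩
    have hsq : ε ^ 2 ≤ (X ω - Y ω) ^ 2 := by
      simpa only [sq_abs] using pow_le_pow_left₀ hε hXY 2
    have := expUtility_avg_add_sq_le_midpoint hXK hYK
    have := mul_le_mul_of_nonneg_left hsq (Real.exp_pos (-K)).le
    simp only [mem_ofPred_eq, gap]
    linarith
  calc Real.exp (-K) * ε ^ 2 / 16 * P.real {ω | ε ≤ |X ω - Y ω| ∧ X ω ≤ K ∧ Y ω ≤ K}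
      ≤ Real.exp (-K) * ε ^ 2 / 16 * P.real {ω | Real.exp (-K) * ε ^ 2 / 16 ≤ gap ω} := by
        gcongr
        exact measure_ne_top _ _
    _ ≤ ∫ ω, gap ω ∂P :=
        mul_meas_ge_le_integral_of_nonneg (ae_of_all _ hgap_nonneg) (hint_mid.sub hint_avg) _
    _ = _ := by
        simp only [gap]
        rw [integral_sub hint_mid hint_avg, integral_div,
          integral_add hint_X hint_Y]

lemma lintegral_ofReal_exp_neg_mul_sub_add_one_le [IsProbabilityMeasure P] {W X : Ω → ℝ}
    (hW : Measurable W) (hW0 : 0 ≤ᵐ[P] W) (hX : Measurable X) (hX0 : ∀ ω, 0 ≤ X ω)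
    (hmax : ∀ t ∈ Ioc (0 : ℝ) 1,
      ∫ ω, expUtility (W ω + t * (X ω - W ω)) ∂P ≤ ∫ ω, expUtility (W ω) ∂P) :
    ∫⁻ ω, ENNReal.ofReal (Real.exp (-W ω) * (X ω - W ω) + 1) ∂P ≤ 1 := by
  set t : ℕ → ℝ := fun n => 1 / ((n : ℝ) + 1)
  have ht : ∀ n, t n ∈ Ioc (0 : ℝ) 1 := fun n =>
    ⟨Nat.one_div_pos_of_nat, div_le_one_of_le₀ (by simp) (by positivity)⟩
  set g : ℕ → Ω → ℝ := fun n ω =>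
    (expUtility (W ω + t n * (X ω - W ω)) - expUtility (W ω)) / t n + 1
  have hg_lim : ∀ ω, Tendsto (fun n => g n ω) atTop
      (𝓝 (Real.exp (-W ω) * (X ω - W ω) + 1)) := fun ω =>
    ((tendsto_slope_expUtility (W ω) (X ω - W ω)).comp
      (tendsto_nhdsWithin_of_tendsto_nhds_of_eventually_within _
        tendsto_one_div_add_atTop_nhds_zero_nat
        (.of_forall fun n => (ht n).1.ne'))).add_const 1
  have hg_int : ∀ n, ∫⁻ ω, ENNReal.ofReal (g n ω) ∂P ≤ 1 := fun n => by
    have hint_t : Integrable (fun ω => expUtility (W ω + t n * (X ω - W ω))) P :=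
      integrable_expUtility_comp (by fun_prop) (by
        filter_upwards [hW0] with ω (hWω : 0 ≤ W ω)
        show 0 ≤ W ω + t n * (X ω - W ω)
        nlinarith [mul_nonneg (sub_nonneg.2 (ht n).2) hWω, mul_nonneg (ht n).1.le (hX0 ω)])
    have hint_W := integrable_expUtility_comp hW.aestronglyMeasurable hW0
    have hint_slope : Integrable
        (fun ω => (expUtility (W ω + t n * (X ω - W ω)) - expUtility (W ω)) / t n) P :=
      (hint_t.sub hint_W).div_const _
    have hint_g : Integrable (g n) P := hint_slope.add (integrable_const 1)
    have hintegral_g : ∫ ω, g n ω ∂P =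
        (∫ ω, expUtility (W ω + t n * (X ω - W ω)) ∂P - ∫ ω, expUtility (W ω) ∂P) / t n + 1 := by
      rw [integral_add hint_slope (integrable_const 1), integral_div,
        integral_sub hint_t hint_W, integral_const, probReal_univ, one_smul]
    rw [← ofReal_integral_eq_lintegral_ofReal hint_g (ae_of_all _ fun ω => by
      simp only [Pi.zero_apply, g]
      linarith [neg_one_le_slope_expUtility (w := W ω) (hX0 ω) (ht n).1 (ht n).2]),
      ENNReal.ofReal_le_one, hintegral_g]
    linarith [div_nonpos_of_nonpos_of_nonneg (sub_nonpos.mpr (hmax _ (ht n))) (ht n).1.le]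
  calc ∫⁻ ω, ENNReal.ofReal (Real.exp (-W ω) * (X ω - W ω) + 1) ∂P
      = ∫⁻ ω, liminf (fun n => ENNReal.ofReal (g n ω)) atTop ∂P :=
        lintegral_congr fun ω => ((ENNReal.continuous_ofReal.tendsto _).comp
          (hg_lim ω)).liminf_eq.symm
    _ ≤ liminf (fun n => ∫⁻ ω, ENNReal.ofReal (g n ω) ∂P) atTop :=
        lintegral_liminf_le fun n => by simp only [g]; fun_prop
    _ ≤ 1 := liminf_le_of_frequently_le' (.of_forall hg_int)

section ConvexFamily

variable {𝒳 : Set (Ω → ℝ)} (h𝒳 : Convex ℝ 𝒳) (hmeas : ∀ X ∈ 𝒳, Measurable X)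
  (hnonneg : ∀ X ∈ 𝒳, ∀ ω, 0 ≤ X ω)
  (hbdd : Tendsto (fun M : ℝ => ⨆ X ∈ 𝒳, P {ω | M ≤ |X ω|}) atTop (𝓝 0))
include h𝒳 hmeas hnonneg hbdd

lemma exists_pos_forall_measure_dist_ge_le [IsFiniteMeasure P] {α : ℝ}
    (hα : ∀ X ∈ 𝒳, ∫ ω, expUtility (X ω) ∂P ≤ α) {ε η : ℝ} (hε : 0 < ε) (hη : 0 < η) :
    ∃ γ > 0, ∀ X ∈ 𝒳, ∀ Y ∈ 𝒳, α - γ < ∫ ω, expUtility (X ω) ∂P →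
      α - γ < ∫ ω, expUtility (Y ω) ∂P → P {ω | ε ≤ dist (X ω) (Y ω)} ≤ ENNReal.ofReal η := by
  obtain ⟨K, hK⟩ : ∃ K : ℝ, ∀ X ∈ 𝒳, P {ω | K ≤ |X ω|} ≤ ENNReal.ofReal (η / 3) :=
    ((hbdd.eventually (ge_mem_nhds (ENNReal.ofReal_pos.mpr (by positivity)))).exists).imp
      fun K hK X hX => (le_iSup₂ (f := fun X _ => P {ω | K ≤ |X ω|}) X hX).trans hK
  set c := Real.exp (-K) * ε ^ 2 / 16
  have hc : 0 < c := by positivity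
  refine ⟨c * (η / 3), by positivity, fun X hX Y hY hXα hYα => ?_⟩
  set A := {ω | ε ≤ |X ω - Y ω| ∧ X ω ≤ K ∧ Y ω ≤ K}
  have hmid : (fun ω => (X ω + Y ω) / 2) ∈ 𝒳 := by
    convert h𝒳 hX hY (by norm_num : (0 : ℝ) ≤ 1 / 2) (by norm_num : (0 : ℝ) ≤ 1 / 2)
      (by norm_num) using 1
    ext ω
    simp only [Pi.add_apply, Pi.smul_apply, smul_eq_mul]
    ring
  have hA : P A ≤ ENNReal.ofReal (η / 3) := by
    have := (mul_measureReal_le_integral_expUtility_midpoint_sub (P := P) (hmeas X hX)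
      (hmeas Y hY) (ae_of_all _ (hnonneg X hX)) (ae_of_all _ (hnonneg Y hY)) hε.le K).trans
      (by linarith [hα _ hmid] : _ ≤ c * (η / 3))
    rw [← ofReal_measureReal]
    exact ENNReal.ofReal_le_ofReal (le_of_mul_le_mul_left this hc)
  have hsub : {ω | ε ≤ dist (X ω) (Y ω)} ⊆ A ∪ {ω | K ≤ |X ω|} ∪ {ω | K ≤ |Y ω|} := by
    intro ω hω
    rw [mem_ofPred_eq, Real.dist_eq] at hω
    by_cases hXK : X ω ≤ K
    · by_cases hYK : Y ω ≤ K
      · exact Or.inl (Or.inl ⟨hω, hXK, hYK⟩)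
      · exact Or.inr ((not_le.mp hYK).le.trans (le_abs_self _))
    · exact Or.inl (Or.inr ((not_le.mp hXK).le.trans (le_abs_self _)))
  calc P {ω | ε ≤ dist (X ω) (Y ω)}
      ≤ P A + P {ω | K ≤ |X ω|} + P {ω | K ≤ |Y ω|} :=
        (measure_mono hsub).trans ((measure_union_le _ _).trans
          (add_le_add_left (measure_union_le _ _) _))
    _ ≤ ENNReal.ofReal (η / 3) + ENNReal.ofReal (η / 3) + ENNReal.ofReal (η / 3) :=
        add_le_add (add_le_add hA (hK X hX)) (hK Y hY)
    _ = ENNReal.ofReal η := by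
        rw [← ENNReal.ofReal_add (by positivity) (by positivity),
          ← ENNReal.ofReal_add (by positivity) (by positivity)]
        ring_nf

lemma exists_seq_ae_tendsto_of_isLUB [IsFiniteMeasure P] {α : ℝ}
    (hα : IsLUB ((fun X => ∫ ω, expUtility (X ω) ∂P) '' 𝒳) α) :
    ∃ Y : ℕ → Ω → ℝ, (∀ n, Y n ∈ 𝒳) ∧
      Tendsto (fun n => ∫ ω, expUtility (Y n ω) ∂P) atTop (𝓝 α) ∧
      ∃ W : Ω → ℝ, Measurable W ∧ ∀ᵐ ω ∂P, Tendsto (fun n => Y n ω) atTop (𝓝 (W ω)) := by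
  have hα_ub : ∀ X ∈ 𝒳, ∫ ω, expUtility (X ω) ∂P ≤ α := fun X hX =>
    hα.1 (mem_image_of_mem _ hX)
  choose γ hγ_pos hγ using fun n : ℕ =>
    exists_pos_forall_measure_dist_ge_le h𝒳 hmeas hnonneg hbdd hα_ub
      (pow_pos (one_half_pos (α := ℝ)) n) (pow_pos (one_half_pos (α := ℝ)) n)
  -- The minimum with `γ (n - 1)` lets the `n`-th estimate apply to both `Y n` and `Y (n + 1)`.
  set d : ℕ → ℝ := fun n => min ((1 / 2) ^ n) (min (γ n) (γ (n - 1)))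
  have hd_pos : ∀ n, 0 < d n := fun n => lt_min (by positivity) (lt_min (hγ_pos n) (hγ_pos _))
  have hex : ∀ n, ∃ Y ∈ 𝒳, α - d n < ∫ ω, expUtility (Y ω) ∂P := fun n => by
    obtain ⟨_, ⟨Y, hY, rfl⟩, hlt, -⟩ := hα.exists_between (sub_lt_self α (hd_pos n))
    exact ⟨Y, hY, hlt⟩
  choose Y hY hYα using hex
  have hstep : ∀ n, P {ω | (1 / 2) ^ n ≤ dist (Y n ω) (Y (n + 1) ω)} ≤
      ENNReal.ofReal ((1 / 2) ^ n) := fun n =>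
    hγ n _ (hY n) _ (hY (n + 1))
      ((sub_le_sub_left ((min_le_right _ _).trans (min_le_left _ _)) α).trans_lt (hYα n))
      ((sub_le_sub_left ((min_le_right _ _).trans (min_le_right _ _)) α).trans_lt (hYα (n + 1)))
  have hsum : ∑' n, P {ω | (1 / 2) ^ n ≤ dist (Y n ω) (Y (n + 1) ω)} ≠ ∞ := by
    refine ne_top_of_le_ne_top ?_ (ENNReal.tsum_le_tsum hstep)
    rw [← ENNReal.ofReal_tsum_of_nonneg (fun n => by positivity) summable_geometric_two]
    exact ENNReal.ofReal_ne_top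
  refine ⟨Y, hY, ?_, exists_measurable_ae_tendsto_of_tsum_measure_ne_top
    (fun n => (hmeas _ (hY n)).aemeasurable) summable_geometric_two hsum⟩
  refine tendsto_of_tendsto_of_tendsto_of_le_of_le (g := fun n => α - (1 / 2) ^ n) ?_
    tendsto_const_nhds (fun n => ?_) (fun n => hα_ub _ (hY n))
  · simpa using tendsto_const_nhds.sub
      (tendsto_pow_atTop_nhds_zero_of_lt_one (by norm_num : (0 : ℝ) ≤ 1 / 2) one_half_lt_one)
  · have : d n ≤ (1 / 2) ^ n := min_le_left _ _
    linarith [hYα n]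

lemma exists_forall_integral_expUtility_segment_le [IsFiniteMeasure P] :
    ∃ W : Ω → ℝ, Measurable W ∧ 0 ≤ᵐ[P] W ∧ ∀ X ∈ 𝒳, ∀ t ∈ Icc (0 : ℝ) 1,
      ∫ ω, expUtility (W ω + t * (X ω - W ω)) ∂P ≤ ∫ ω, expUtility (W ω) ∂P := by
  rcases 𝒳.eq_empty_or_nonempty with rfl | hne
  · exact ⟨0, measurable_const, EventuallyLE.rfl, by simp⟩
  have hbdd_above : BddAbove ((fun X => ∫ ω, expUtility (X ω) ∂P) '' 𝒳) := by
    refine ⟨P.real univ, forall_mem_image.mpr fun X hX => ?_⟩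
    simpa using integral_mono_of_nonneg (ae_of_all _ fun ω => expUtility_nonneg (hnonneg X hX ω))
      (integrable_const (μ := P) (1 : ℝ)) (ae_of_all _ fun ω => expUtility_le_one (X ω))
  obtain ⟨α, hα⟩ := Real.exists_isLUB (hne.image _) hbdd_above
  obtain ⟨Y, hY, hYα, W, hW, hlim⟩ := exists_seq_ae_tendsto_of_isLUB h𝒳 hmeas hnonneg hbdd hα
  have hW0 : 0 ≤ᵐ[P] W := hlim.mono fun ω h => ge_of_tendsto' h fun n => hnonneg _ (hY n) ω
  have hWα : ∫ ω, expUtility (W ω) ∂P = α := tendsto_nhds_unique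
    (tendsto_integral_expUtility_comp (fun n => (hmeas _ (hY n)).aestronglyMeasurable)
      (fun n => ae_of_all _ (hnonneg _ (hY n))) hlim) hYα
  refine ⟨W, hW, hW0, fun X hX t ht => hWα ▸ ?_⟩
  have hseg : ∀ n, (fun ω => Y n ω + t * (X ω - Y n ω)) ∈ 𝒳 := fun n =>
    h𝒳.add_smul_sub_mem (hY n) hX ht
  refine le_of_tendsto (tendsto_integral_expUtility_comp
    (fun n => (hmeas _ (hseg n)).aestronglyMeasurable) (fun n => ae_of_all _ (hnonneg _ (hseg n)))
    (hlim.mono fun ω h => h.add ((tendsto_const_nhds.sub h).const_mul t)))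
    (.of_forall fun n => hα.1 (mem_image_of_mem _ (hseg n)))

lemma exists_measurable_forall_lintegral_ofReal_mul_exp_neg_le_one [IsProbabilityMeasure P] :
    ∃ W : Ω → ℝ, Measurable W ∧
      ∀ X ∈ 𝒳, ∫⁻ ω, ENNReal.ofReal (X ω * Real.exp (-W ω)) ∂P ≤ 1 := by
  obtain ⟨W, hW, hW0, hmax⟩ := exists_forall_integral_expUtility_segment_le h𝒳 hmeas hnonneg hbdd
  refine ⟨W, hW, fun X hX => (lintegral_mono fun ω => ENNReal.ofReal_le_ofReal
    (mul_exp_neg_le_exp_neg_mul_sub_add_one (X ω) (W ω))).trans ?_⟩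
  exact lintegral_ofReal_exp_neg_mul_sub_add_one_le hW hW0 (hmeas X hX) (hnonneg X hX)
    fun t ht => hmax X hX t (Ioc_subset_Icc_self ht)

end ConvexFamily

lemma measure_le_le_lintegral_mul_div_add_measure_lt {X Z : Ω → ℝ}
    (hXZ : AEMeasurable (fun ω => X ω * Z ω) P) {M δ : ℝ} (hM : 0 < M) (hδ : 0 < δ) :
    P {ω | M ≤ X ω} ≤
      (∫⁻ ω, ENNReal.ofReal (X ω * Z ω) ∂P) / ENNReal.ofReal (M * δ) + P {ω | Z ω < δ} := by
  have hsub : {ω | M ≤ X ω} ⊆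
      {ω | ENNReal.ofReal (M * δ) ≤ ENNReal.ofReal (X ω * Z ω)} ∪ {ω | Z ω < δ} := by
    intro ω hX
    by_cases hZ : Z ω < δ
    · exact Or.inr hZ
    · exact Or.inl (ENNReal.ofReal_le_ofReal
        (mul_le_mul hX (not_lt.mp hZ) hδ.le (hM.le.trans hX)))
  refine (measure_mono hsub).trans ((measure_union_le _ _).trans (add_le_add_left ?_ _))
  exact meas_ge_le_lintegral_div hXZ.ennreal_ofReal
    (ENNReal.ofReal_pos.mpr (mul_pos hM hδ)).ne' ENNReal.ofReal_ne_top

lemma tendsto_measure_lt_nhdsGT_zero [IsFiniteMeasure P] {Z : Ω → ℝ} (hZ : Measurable Z)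
    (hZ0 : ∀ᵐ ω ∂P, 0 < Z ω) :
    Tendsto (fun δ => P {ω | Z ω < δ}) (𝓝[>] 0) (𝓝 0) := by
  have h := tendsto_measure_biInter_gt (μ := P) (s := fun δ : ℝ => {ω | Z ω < δ}) (a := 0)
    (fun δ _ => (measurableSet_lt hZ measurable_const).nullMeasurableSet)
    (fun i j _ hij ω hω => lt_of_lt_of_le hω hij) ⟨1, one_pos, measure_ne_top _ _⟩
  have hinter : (⋂ δ > (0 : ℝ), {ω | Z ω < δ}) = {ω | Z ω ≤ 0} := by
    ext ω
    simp only [mem_iInter, mem_ofPred_eq]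
    exact ⟨fun h => le_of_forall_gt h, fun h δ hδ => h.trans_lt hδ⟩
  rwa [hinter, show P {ω | Z ω ≤ 0} = 0 by simpa [ae_iff] using hZ0] at h

lemma tendsto_iSup_measure_le_abs_of_iSup_lintegral_mul_lt_top [IsFiniteMeasure P]
    {𝒳 : Set (Ω → ℝ)} (hmeas : ∀ X ∈ 𝒳, Measurable X) (hnonneg : ∀ X ∈ 𝒳, ∀ ω, 0 ≤ X ω)
    {Z : Ω → ℝ} (hZ : Measurable Z) (hZ0 : ∀ᵐ ω ∂P, 0 < Z ω)
    (hC : (⨆ X ∈ 𝒳, ∫⁻ ω, ENNReal.ofReal (X ω * Z ω) ∂P) < ⊤) :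
    Tendsto (fun M : ℝ => ⨆ X ∈ 𝒳, P {ω | M ≤ |X ω|}) atTop (𝓝 0) := by
  set C := ⨆ X ∈ 𝒳, ∫⁻ ω, ENNReal.ofReal (X ω * Z ω) ∂P
  rw [ENNReal.tendsto_nhds_zero]
  intro ε hε
  have hε2 : 0 < ε / 2 := ENNReal.half_pos hε.ne'
  obtain ⟨δ, hδZ, hδ⟩ := (((tendsto_measure_lt_nhdsGT_zero hZ hZ0).eventually_le_const hε2).and
    self_mem_nhdsWithin).exists
  have hdiv : Tendsto (fun M : ℝ => C / ENNReal.ofReal (M * δ)) atTop (𝓝 0) := by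
    have := ENNReal.Tendsto.const_div (a := C)
      (ENNReal.tendsto_ofReal_atTop.comp (tendsto_id.atTop_mul_const hδ)) (Or.inr hC.ne)
    simpa using this
  filter_upwards [hdiv.eventually_le_const hε2, eventually_gt_atTop 0] with M hCM hM
  refine iSup₂_le fun X hX => ?_
  calc P {ω | M ≤ |X ω|} = P {ω | M ≤ X ω} := by simp only [abs_of_nonneg (hnonneg X hX _)]
    _ ≤ (∫⁻ ω, ENNReal.ofReal (X ω * Z ω) ∂P) / ENNReal.ofReal (M * δ) + P {ω | Z ω < δ} :=
      measure_le_le_lintegral_mul_div_add_measure_lt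
        ((hmeas X hX).mul hZ).aemeasurable hM hδ
    _ ≤ C / ENNReal.ofReal (M * δ) + ε / 2 :=
      add_le_add (ENNReal.div_le_div_right (le_iSup₂ (f := fun X _ => _) X hX) _) hδZ
    _ ≤ ε / 2 + ε / 2 := add_le_add_left hCM _
    _ = ε := ENNReal.add_halves ε

end Measure

/-- A convex family `𝒳` of nonnegative random variables is bounded in
probability if and only if there exists a random variable `Z` with `P(Z > 0) = 1` such that
`sup_{X ∈ 𝒳} E[X Z] < ∞`. -/
theorem statement1 {Ω : Type*} [MeasurableSpace Ω] (P : Measure Ω) [IsProbabilityMeasure P]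
    (𝒳 : Set (Ω → ℝ)) (h𝒳meas : ∀ X ∈ 𝒳, Measurable X)
    (h𝒳nonneg : ∀ X ∈ 𝒳, ∀ ω, 0 ≤ X ω)
    (h𝒳convex : ∀ X ∈ 𝒳, ∀ Y ∈ 𝒳, ∀ l : ℝ, l ∈ Icc (0 : ℝ) 1 →
      (fun ω => l * X ω + (1 - l) * Y ω) ∈ 𝒳) :
    Tendsto (fun M : ℝ => ⨆ X ∈ 𝒳, P {ω | M ≤ |X ω|}) atTop (𝓝 0) ↔
      ∃ Z : Ω → ℝ, Measurable Z ∧ P {ω | 0 < Z ω} = 1 ∧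
        (⨆ X ∈ 𝒳, ∫⁻ ω, ENNReal.ofReal (X ω * Z ω) ∂P) < ⊤ := by
  constructor
  · intro hbdd
    obtain ⟨W, hW, hbound⟩ := exists_measurable_forall_lintegral_ofReal_mul_exp_neg_le_one
      (convex_of_forall_combo_mem h𝒳convex) h𝒳meas h𝒳nonneg hbdd
    refine ⟨fun ω => Real.exp (-W ω), by fun_prop, by simp [Real.exp_pos], ?_⟩
    exact (iSup₂_le hbound).trans_lt ENNReal.one_lt_top
  · rintro ⟨Z, hZ, hZpos, hC⟩
    have hZ0 : ∀ᵐ ω ∂P, 0 < Z ω :=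
      (prob_compl_eq_zero_iff (measurableSet_lt measurable_const hZ)).mpr hZpos
    exact tendsto_iSup_measure_le_abs_of_iSup_lintegral_mul_lt_top h𝒳meas h𝒳nonneg hZ hZ0 hC
end

section
/- Let (Ω, F, P) be a probability space and, for every n ∈ ℕ, let (Aⁿ_k : 1 ≤ k ≤ 2ⁿ) be a measurable partition of Ω with P(Aⁿ_k) = 2^{−n} for all k. Define Xⁿ_k = 2^{2n} 1_{Aⁿ_k}. Then: (i) the family (Xⁿ_k : n ∈ ℕ, 1 ≤ k ≤ 2ⁿ) is bounded in probability; (ii) if Z is a nonnegative random variable and C > 0 is a constant such that E[Z Xⁿ_k] ≤ C for all n and k, then Z = 0 almost surely. In particular, the convexity assumption cannot be dropped from the statement that a bounded-in-probability family of nonnegative random variables admits a strictly positive Z with sup E[XZ] < ∞. -/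
open MeasureTheory Filter Set
open scoped ENNReal NNReal Topology

/-!
(i) `Xⁿ_k` vanishes off `Aⁿ_k` and never exceeds `4ⁿ`, so `P(|Xⁿ_k| ≥ M)` is `0` when `M > 4ⁿ`
and at most `P(Aⁿ_k) = 2⁻ⁿ` otherwise; for `M > 4ᴺ` every term is at most `2⁻ᴺ`.

(ii) Since the `2ⁿ` sets `Aⁿ_k` cover `Ω` and `E[Z Xⁿ_k] = 4ⁿ E[Z; Aⁿ_k] ≤ C`,
`E[Z] ≤ ∑_k E[Z; Aⁿ_k] ≤ 2ⁿ C / 4ⁿ = C 2⁻ⁿ` for every `n`, so `E[Z] = 0`.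
-/

section Indicator

variable {Ω : Type*} (s : Set Ω) (c M : ℝ)

lemma setOf_le_abs_mul_indicator_one_subset (hM : 0 < M) :
    {ω | M ≤ |c * s.indicator 1 ω|} ⊆ s := by
  intro ω hω
  by_contra hωs
  simp only [mem_ofPred_eq, indicator_of_notMem hωs, mul_zero, abs_zero] at hω
  exact hω.not_gt hM

lemma setOf_le_abs_mul_indicator_one_eq_empty (hM : |c| < M) :
    {ω | M ≤ |c * s.indicator 1 ω|} = ∅ := by
  refine eq_empty_of_forall_notMem fun ω hω => ?_
  by_cases hωs : ω ∈ s
  · simp only [mem_ofPred_eq, indicator_of_mem hωs, Pi.one_apply, mul_one] at hω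
    exact hω.not_gt hM
  · simp only [mem_ofPred_eq, indicator_of_notMem hωs, mul_zero, abs_zero] at hω
    exact hω.not_gt ((abs_nonneg c).trans_lt hM)

end Indicator

lemma lintegral_ofReal_mul_const_mul_indicator_one {Ω : Type*} [MeasurableSpace Ω]
    (μ : Measure Ω) {s : Set Ω} (hs : MeasurableSet s) (f : Ω → ℝ) {c : ℝ} (hc : 0 ≤ c) :
    ∫⁻ ω, ENNReal.ofReal (f ω * (c * s.indicator 1 ω)) ∂μ =
      ENNReal.ofReal c * ∫⁻ ω in s, ENNReal.ofReal (f ω) ∂μ := by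
  have hfun : (fun ω => ENNReal.ofReal (f ω * (c * s.indicator 1 ω))) =
      s.indicator fun ω => ENNReal.ofReal c * ENNReal.ofReal (f ω) := by
    ext ω
    by_cases hω : ω ∈ s
    · simp only [indicator_of_mem hω, Pi.one_apply, mul_one, mul_comm (f ω),
        ENNReal.ofReal_mul hc]
    · simp [indicator_of_notMem hω]
  rw [hfun, lintegral_indicator hs, lintegral_const_mul' _ _ ENNReal.ofReal_ne_top]

lemma lintegral_le_card_mul_of_iUnion_eq_univ {α ι : Type*} [MeasurableSpace α] [Fintype ι]
    {μ : Measure α} {s : ι → Set α} (hs : ⋃ i, s i = univ) {f : α → ℝ≥0∞} {c : ℝ≥0∞}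
    (hf : ∀ i, ∫⁻ a in s i, f a ∂μ ≤ c) :
    ∫⁻ a, f a ∂μ ≤ Fintype.card ι * c :=
  calc ∫⁻ a, f a ∂μ = ∫⁻ a in ⋃ i, s i, f a ∂μ := by rw [hs, Measure.restrict_univ]
    _ ≤ ∑' i, ∫⁻ a in s i, f a ∂μ := lintegral_iUnion_le s f
    _ ≤ ∑ _i : ι, c := by
        rw [tsum_fintype]
        exact Finset.sum_le_sum fun i _ => hf i
    _ = Fintype.card ι * c := by simp

lemma ENNReal.eq_zero_of_forall_le_mul_inv_two_pow {a c : ℝ≥0∞} (hc : c ≠ ∞)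
    (h : ∀ n : ℕ, a ≤ c * 2⁻¹ ^ n) : a = 0 := by
  have hlim : Tendsto (fun n : ℕ => c * 2⁻¹ ^ n) atTop (𝓝 0) := by
    simpa using ENNReal.Tendsto.const_mul
      (ENNReal.tendsto_pow_atTop_nhds_zero_of_lt_one (ENNReal.inv_lt_one.2 one_lt_two))
      (Or.inr hc)
  exact nonpos_iff_eq_zero.1 (ge_of_tendsto' hlim h)

section DyadicFamily

variable {Ω : Type*} [MeasurableSpace Ω] {P : Measure Ω}
  {A : (n : ℕ) → Fin (2 ^ n) → Set Ω} {X : (n : ℕ) → Fin (2 ^ n) → Ω → ℝ}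

lemma iSup_measure_le_abs_le_inv_two_pow (hprob : ∀ n k, P (A n k) = 1 / 2 ^ n)
    (hX : ∀ n k ω, X n k ω = 2 ^ (2 * n) * (A n k).indicator 1 ω) {N : ℕ} {M : ℝ}
    (hM : 2 ^ (2 * N) < M) :
    ⨆ n, ⨆ k, P {ω | M ≤ |X n k ω|} ≤ 2⁻¹ ^ N := by
  refine iSup₂_le fun n k => ?_
  simp only [hX]
  rcases le_or_gt N n with hNn | hnN
  · calc P {ω | M ≤ |2 ^ (2 * n) * (A n k).indicator 1 ω|}
        ≤ P (A n k) := measure_mono (setOf_le_abs_mul_indicator_one_subset _ _ _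
          ((pow_pos two_pos _).trans hM))
      _ = 2⁻¹ ^ n := by rw [hprob, one_div, ENNReal.inv_pow]
      _ ≤ 2⁻¹ ^ N := pow_le_pow_of_le_one zero_le (ENNReal.inv_le_one.2 one_le_two) hNn
  · have hsmall : |(2 : ℝ) ^ (2 * n)| < M := by
      rw [abs_of_pos (pow_pos two_pos _)]
      exact (pow_lt_pow_right₀ one_lt_two (by omega)).trans hM
    rw [setOf_le_abs_mul_indicator_one_eq_empty _ _ _ hsmall, measure_empty]
    exact zero_le

lemma lintegral_ofReal_le_mul_inv_two_pow (hmeas : ∀ n k, MeasurableSet (A n k))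
    (hcover : ∀ n, ⋃ k, A n k = univ)
    (hX : ∀ n k ω, X n k ω = 2 ^ (2 * n) * (A n k).indicator 1 ω) (Z : Ω → ℝ) {C : ℝ≥0∞}
    (hbound : ∀ n k, ∫⁻ ω, ENNReal.ofReal (Z ω * X n k ω) ∂P ≤ C) (n : ℕ) :
    ∫⁻ ω, ENNReal.ofReal (Z ω) ∂P ≤ C * 2⁻¹ ^ n := by
  have h4 : ENNReal.ofReal (2 ^ (2 * n)) = 2 ^ n * 2 ^ n := by
    rw [ENNReal.ofReal_pow zero_le_two, two_mul, pow_add, ENNReal.ofReal_ofNat]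
  have h2ne0 : (2 : ℝ≥0∞) ^ n ≠ 0 := pow_ne_zero n two_ne_zero
  have h2neTop : (2 : ℝ≥0∞) ^ n ≠ ∞ := ENNReal.pow_ne_top ENNReal.ofNat_ne_top
  have hpiece : ∀ k, ∫⁻ ω in A n k, ENNReal.ofReal (Z ω) ∂P ≤ C / (2 ^ n * 2 ^ n) := by
    intro k
    rw [ENNReal.le_div_iff_mul_le (Or.inl (mul_ne_zero h2ne0 h2ne0))
      (Or.inl (ENNReal.mul_ne_top h2neTop h2neTop)), mul_comm, ← h4,
      ← lintegral_ofReal_mul_const_mul_indicator_one P (hmeas n k) Z (by positivity)]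
    simpa only [hX] using hbound n k
  calc ∫⁻ ω, ENNReal.ofReal (Z ω) ∂P
      ≤ Fintype.card (Fin (2 ^ n)) * (C / (2 ^ n * 2 ^ n)) :=
        lintegral_le_card_mul_of_iUnion_eq_univ (hcover n) hpiece
    _ = C * 2⁻¹ ^ n := by
        rw [Fintype.card_fin, Nat.cast_pow, Nat.cast_ofNat, ENNReal.div_eq_inv_mul,
          ENNReal.mul_inv (Or.inl h2ne0) (Or.inl h2neTop), ← mul_assoc, ← mul_assoc,
          ENNReal.mul_inv_cancel h2ne0 h2neTop, one_mul, ENNReal.inv_pow, mul_comm]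

end DyadicFamily

theorem statement2_general {Ω : Type*} [MeasurableSpace Ω] (P : Measure Ω)
    (A : (n : ℕ) → Fin (2 ^ n) → Set Ω)
    (hmeas : ∀ n k, MeasurableSet (A n k))
    (hcover : ∀ n, ⋃ k, A n k = univ)
    (hprob : ∀ n k, P (A n k) = 1 / 2 ^ n)
    (X : (n : ℕ) → Fin (2 ^ n) → Ω → ℝ)
    (hX : ∀ n k ω, X n k ω = 2 ^ (2 * n) * (A n k).indicator 1 ω) :
    Tendsto (fun M : ℝ => ⨆ n, ⨆ k, P {ω | M ≤ |X n k ω|}) atTop (𝓝 0) ∧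
    ∀ Z : Ω → ℝ, Measurable Z → (∀ ω, 0 ≤ Z ω) → ∀ C : ℝ, 0 < C →
      (∀ n k, ∫⁻ ω, ENNReal.ofReal (Z ω * X n k ω) ∂P ≤ ENNReal.ofReal C) →
      ∀ᵐ ω ∂P, Z ω = 0 := by
  constructor
  · rw [ENNReal.tendsto_nhds_zero]
    intro ε hε
    obtain ⟨N, hN⟩ := ENNReal.exists_inv_two_pow_lt hε.ne'
    filter_upwards [eventually_gt_atTop ((2 : ℝ) ^ (2 * N))] with M hM
    exact (iSup_measure_le_abs_le_inv_two_pow hprob hX hM).trans hN.le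
  · intro Z hZm hZ0 C _ hbound
    have hint : ∫⁻ ω, ENNReal.ofReal (Z ω) ∂P = 0 :=
      ENNReal.eq_zero_of_forall_le_mul_inv_two_pow ENNReal.ofReal_ne_top
        (lintegral_ofReal_le_mul_inv_two_pow hmeas hcover hX Z hbound)
    filter_upwards [(lintegral_eq_zero_iff hZm.ennreal_ofReal).1 hint] with ω hω
    exact le_antisymm (ENNReal.ofReal_eq_zero.1 hω) (hZ0 ω)

/-- For measurable partitions `(Aⁿ_k)_{1 ≤ k ≤ 2ⁿ}` of `Ω` with
`P(Aⁿ_k) = 2⁻ⁿ` and `Xⁿ_k = 2^{2n} 1_{Aⁿ_k}`: (i) the family `(Xⁿ_k)` is bounded in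
probability; (ii) any nonnegative random variable `Z` with `E[Z Xⁿ_k] ≤ C` for all `n, k`
(for some constant `C > 0`) vanishes almost surely. -/
theorem statement2 {Ω : Type*} [MeasurableSpace Ω] (P : Measure Ω) [IsProbabilityMeasure P]
    (A : (n : ℕ) → Fin (2 ^ n) → Set Ω)
    (hmeas : ∀ n k, MeasurableSet (A n k))
    (hdisj : ∀ n, Pairwise fun k l => Disjoint (A n k) (A n l))
    (hcover : ∀ n, ⋃ k, A n k = univ)
    (hprob : ∀ n k, P (A n k) = 1 / 2 ^ n)
    (X : (n : ℕ) → Fin (2 ^ n) → Ω → ℝ)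
    (hX : ∀ n k ω, X n k ω = 2 ^ (2 * n) * (A n k).indicator 1 ω) :
    Tendsto (fun M : ℝ => ⨆ n, ⨆ k, P {ω | M ≤ |X n k ω|}) atTop (𝓝 0) ∧
    ∀ Z : Ω → ℝ, Measurable Z → (∀ ω, 0 ≤ Z ω) → ∀ C : ℝ, 0 < C →
      (∀ n k, ∫⁻ ω, ENNReal.ofReal (Z ω * X n k ω) ∂P ≤ ENNReal.ofReal C) →
      ∀ᵐ ω ∂P, Z ω = 0 :=
  statement2_general P A hmeas hcover hprob X hX
end

section
/- Let (Ω, F, P) be a probability space and let M₁ be a random variable whose law under P is the standard normal distribution ν on ℝ. For every n ∈ ℕ, let (Aⁿ_k : 1 ≤ k ≤ 2ⁿ) be a Borel partition of ℝ with ν(Aⁿ_k) = 2^{−n} for all k, and define the random variables Xⁿ_k = 2ⁿ 1_{Aⁿ_k}(M₁). Then for every probability measure Q on (Ω, F) with Q ≪ P and every measurable function g : [0,∞) → [0,∞) with lim_{x→∞} g(x)/x = ∞, one has sup_{n,k} E_Q[g(Xⁿ_k)] = ∞. Consequently the family (Xⁿ_k) is not uniformly integrable under any absolutely continuous probability measure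 Q ≪ P. -/
open MeasureTheory Filter Set
open scoped ENNReal NNReal Topology

/-!
Whatever probability measure `Q` is used, the `2ⁿ` cells `{M₁ ∈ Aⁿ_k}` cover `Ω`, so one of them
carries `Q`-mass at least `2⁻ⁿ`. On that cell `Xⁿ_k = 2ⁿ`, hence `E_Q[g(Xⁿ_k)] ≥ g(2ⁿ)/2ⁿ → ∞`,
and `E_Q[|Xⁿ_k|; |Xⁿ_k| ≥ M] ≥ 1` as soon as `2ⁿ ≥ M`.
-/

theorem MeasureTheory.exists_measure_univ_le_card_mul {α ι : Type*} [MeasurableSpace α]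
    [Fintype ι] [Nonempty ι] (μ : Measure α) {s : ι → Set α} (hs : ⋃ i, s i = univ) :
    ∃ i, μ univ ≤ Fintype.card ι * μ (s i) := by
  obtain ⟨i, -, hi⟩ := Finset.exists_max_image Finset.univ (fun i => μ (s i)) Finset.univ_nonempty
  refine ⟨i, ?_⟩
  calc μ univ = μ (⋃ i, s i) := by rw [hs]
    _ ≤ ∑ j, μ (s j) := measure_iUnion_fintype_le μ s
    _ ≤ Fintype.card ι * μ (s i) := by
      simpa using Finset.sum_le_card_nsmul Finset.univ _ _ fun j _ => hi j (Finset.mem_univ j)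

theorem MeasureTheory.mul_measure_le_lintegral_of_eqOn {α : Type*} [MeasurableSpace α]
    {μ : Measure α} {f : α → ℝ≥0∞} {s : Set α} {c : ℝ≥0∞} (hs : MeasurableSet s)
    (hf : ∀ x ∈ s, f x = c) : c * μ s ≤ ∫⁻ x, f x ∂μ :=
  calc c * μ s = ∫⁻ x in s, f x ∂μ := by
        rw [setLIntegral_congr_fun hs hf, setLIntegral_const]
    _ ≤ ∫⁻ x, f x ∂μ := setLIntegral_le_lintegral s f

section HeavyCells

variable {Ω : Type*} [MeasurableSpace Ω] {μ : Measure Ω} {Y : ℕ → Ω → ℝ} {B : ℕ → Set Ω}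
  {c : ℕ → ℝ}

theorem iSup_lintegral_ofReal_comp_eq_top (hB : ∀ n, MeasurableSet (B n))
    (hY : ∀ n, ∀ ω ∈ B n, Y n ω = c n) (hmass : ∀ n, 1 ≤ ENNReal.ofReal (c n) * μ (B n))
    (hc : Tendsto c atTop atTop) {g : ℝ → ℝ} (hg : Tendsto (fun x => g x / x) atTop atTop) :
    ⨆ n, ∫⁻ ω, ENNReal.ofReal (g (Y n ω)) ∂μ = ⊤ := by
  have hlim : Tendsto (fun n => ENNReal.ofReal (g (c n) / c n)) atTop (𝓝 ⊤) :=
    ENNReal.tendsto_ofReal_atTop.comp (hg.comp hc)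
  refine top_le_iff.1 (le_of_tendsto hlim ?_)
  filter_upwards [hc.eventually_gt_atTop 0] with n hn
  calc ENNReal.ofReal (g (c n) / c n) = ENNReal.ofReal (g (c n)) / ENNReal.ofReal (c n) :=
        ENNReal.ofReal_div_of_pos hn
    _ ≤ ENNReal.ofReal (g (c n)) * μ (B n) := by
        refine ENNReal.div_le_of_le_mul ?_
        rw [mul_assoc, mul_comm (μ (B n))]
        exact le_mul_of_one_le_right' (hmass n)
    _ ≤ ∫⁻ ω, ENNReal.ofReal (g (Y n ω)) ∂μ :=
        mul_measure_le_lintegral_of_eqOn (hB n) fun ω hω => by rw [hY n ω hω]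
    _ ≤ ⨆ n, ∫⁻ ω, ENNReal.ofReal (g (Y n ω)) ∂μ :=
        le_iSup (fun n => ∫⁻ ω, ENNReal.ofReal (g (Y n ω)) ∂μ) n

theorem one_le_iSup_setLIntegral_abs_ge (hB : ∀ n, MeasurableSet (B n))
    (hY : ∀ n, ∀ ω ∈ B n, Y n ω = c n) (hmass : ∀ n, 1 ≤ ENNReal.ofReal (c n) * μ (B n))
    (hc : Tendsto c atTop atTop) (M : ℝ) :
    1 ≤ ⨆ n, ∫⁻ ω in {ω | M ≤ |Y n ω|}, ENNReal.ofReal |Y n ω| ∂μ := by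
  obtain ⟨n, hMn, hn⟩ := ((hc.eventually_ge_atTop M).and (hc.eventually_ge_atTop 0)).exists
  have hsub : B n ⊆ {ω | M ≤ |Y n ω|} := fun ω hω => by
    show M ≤ |Y n ω|
    rwa [hY n ω hω, abs_of_nonneg hn]
  calc 1 ≤ ENNReal.ofReal |c n| * μ (B n) := by rw [abs_of_nonneg hn]; exact hmass n
    _ = ENNReal.ofReal |c n| * μ.restrict {ω | M ≤ |Y n ω|} (B n) := by
        rw [Measure.restrict_apply (hB n), inter_eq_left.2 hsub]
    _ ≤ ∫⁻ ω in {ω | M ≤ |Y n ω|}, ENNReal.ofReal |Y n ω| ∂μ :=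
        mul_measure_le_lintegral_of_eqOn (hB n) fun ω hω => by rw [hY n ω hω]
    _ ≤ _ := le_iSup (fun n => ∫⁻ ω in {ω | M ≤ |Y n ω|}, ENNReal.ofReal |Y n ω| ∂μ) n

end HeavyCells

theorem statement3_general {Ω : Type*} [MeasurableSpace Ω] (P : Measure Ω)
    (M₁ : Ω → ℝ) (hM₁ : Measurable M₁)
    (A : (n : ℕ) → Fin (2 ^ n) → Set ℝ)
    (hmeas : ∀ n k, MeasurableSet (A n k))
    (hcover : ∀ n, ⋃ k, A n k = univ)
    (X : (n : ℕ) → Fin (2 ^ n) → Ω → ℝ)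
    (hX : ∀ n k ω, X n k ω = 2 ^ n * (A n k).indicator 1 (M₁ ω)) :
    ∀ Q : Measure Ω, IsProbabilityMeasure Q → Q ≪ P →
      (∀ g : ℝ → ℝ, Measurable g → (∀ x ∈ Ici (0 : ℝ), 0 ≤ g x) →
        Tendsto (fun x => g x / x) atTop atTop →
        (⨆ n, ⨆ k, ∫⁻ ω, ENNReal.ofReal (g (X n k ω)) ∂Q) = ⊤) ∧
      ¬ Tendsto
          (fun M : ℝ => ⨆ n, ⨆ k, ∫⁻ ω in {ω | M ≤ |X n k ω|}, ENNReal.ofReal |X n k ω| ∂Q)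
          atTop (𝓝 0) := by
  intro Q _ _
  have heavy : ∀ n, ∃ k, 1 ≤ ENNReal.ofReal (2 ^ n) * Q (M₁ ⁻¹' A n k) := fun n => by
    obtain ⟨k, hk⟩ := exists_measure_univ_le_card_mul Q (s := fun k => M₁ ⁻¹' A n k)
      (by rw [← preimage_iUnion, hcover n, preimage_univ])
    refine ⟨k, ?_⟩
    simpa [ENNReal.ofReal_pow] using hk
  choose k hk using heavy
  have hB : ∀ n, MeasurableSet (M₁ ⁻¹' A n (k n)) := fun n => hM₁ (hmeas n (k n))
  have hY : ∀ n, ∀ ω ∈ M₁ ⁻¹' A n (k n), X n (k n) ω = 2 ^ n := fun n ω hω => by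
    rw [hX, indicator_of_mem (show M₁ ω ∈ A n (k n) from hω), Pi.one_apply, mul_one]
  have hc : Tendsto (fun n : ℕ => (2 : ℝ) ^ n) atTop atTop :=
    tendsto_pow_atTop_atTop_of_one_lt one_lt_two
  refine ⟨fun g _ _ hg => top_unique ?_, fun hT => ?_⟩
  · rw [← iSup_lintegral_ofReal_comp_eq_top hB hY hk hc hg]
    exact iSup_mono fun n => le_iSup (fun k => ∫⁻ ω, ENNReal.ofReal (g (X n k ω)) ∂Q) (k n)
  · obtain ⟨M, hM⟩ := (hT.eventually (gt_mem_nhds zero_lt_one)).exists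
    refine hM.not_ge ((one_le_iSup_setLIntegral_abs_ge hB hY hk hc M).trans ?_)
    exact iSup_mono fun n =>
      le_iSup (fun k => ∫⁻ ω in {ω | M ≤ |X n k ω|}, ENNReal.ofReal |X n k ω| ∂Q) (k n)

/-- Let `M₁` have standard normal law `ν` under `P`, let `(Aⁿ_k)` be Borel
partitions of `ℝ` with `ν(Aⁿ_k) = 2⁻ⁿ`, and `Xⁿ_k = 2ⁿ 1_{Aⁿ_k}(M₁)`. Then for every
probability measure `Q ≪ P` and every measurable `g : [0,∞) → [0,∞)` with `g(x)/x → ∞`,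
`sup_{n,k} E_Q[g(Xⁿ_k)] = ∞`; consequently the family `(Xⁿ_k)` is not uniformly integrable
under any such `Q`. -/
theorem statement3 {Ω : Type*} [MeasurableSpace Ω] (P : Measure Ω) [IsProbabilityMeasure P]
    (M₁ : Ω → ℝ) (hM₁ : Measurable M₁)
    (hlaw : P.map M₁ = ProbabilityTheory.gaussianReal 0 1)
    (A : (n : ℕ) → Fin (2 ^ n) → Set ℝ)
    (hmeas : ∀ n k, MeasurableSet (A n k))
    (hdisj : ∀ n, Pairwise fun k l => Disjoint (A n k) (A n l))
    (hcover : ∀ n, ⋃ k, A n k = univ)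
    (hν : ∀ n k, ProbabilityTheory.gaussianReal 0 1 (A n k) = 1 / 2 ^ n)
    (X : (n : ℕ) → Fin (2 ^ n) → Ω → ℝ)
    (hX : ∀ n k ω, X n k ω = 2 ^ n * (A n k).indicator 1 (M₁ ω)) :
    ∀ Q : Measure Ω, IsProbabilityMeasure Q → Q ≪ P →
      (∀ g : ℝ → ℝ, Measurable g → (∀ x ∈ Ici (0 : ℝ), 0 ≤ g x) →
        Tendsto (fun x => g x / x) atTop atTop →
        (⨆ n, ⨆ k, ∫⁻ ω, ENNReal.ofReal (g (X n k ω)) ∂Q) = ⊤) ∧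
      ¬ Tendsto
          (fun M : ℝ => ⨆ n, ⨆ k, ∫⁻ ω in {ω | M ≤ |X n k ω|}, ENNReal.ofReal |X n k ω| ∂Q)
          atTop (𝓝 0) :=
  statement3_general P M₁ hM₁ A hmeas hcover X hX
end

section
/- Let (Ω, F, P) be a probability space with a two-step filtration (F₀, F₁), and let 𝒴 be a family of pairs Y = (Y₀, Y₁) of nonnegative random variables with Y_i being F_i-measurable, such that: (i) 𝒴 is L¹-bounded, i.e. sup_{Y ∈ 𝒴} max_{i=0,1} E[Y_i] < ∞; (ii) 𝒴 is fork-convex: for every Y ∈ 𝒴, Y₀ = 0 implies Y₁ = 0 almost surely, and for all Y¹, Y², Y³ ∈ 𝒴 and every F₀-measurable random variable λ with values in [0,1], the pair (Y¹₀, Y¹₀ (λ Y²₁/Y²₀ + (1−λ) Y³₁/Y³₀)) belongs to 𝒴 (with the convention 0/0 = 0); (iii) 𝒴 contains a pair of the form (1, Y*₁) with Y*₁ strictly positive almost surely. Then there exists a strictly positive F₀-measurable random variable Z such that for every Y ∈ 𝒴 the pair (Y₀ Z, Y₁) is a supermartingale, i.e. Y₀Z is integrable and E[1_A Y₁] ≤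 E[1_A Y₀ Z] for every A ∈ F₀. Moreover Z can be chosen so that E[Y₀ Z] ≤ sup_{Y ∈ 𝒴} max_{i=0,1} E[Y_i] for every Y ∈ 𝒴. -/
/-!
Let `𝒟` be the set of `f` with `(1, f) ∈ 𝒴`. Fork-convexity makes `𝒟` closed under pasting along
`F₀`-measurable sets, so the conditional expectations `E[f | F₀]`, `f ∈ 𝒟`, form an a.e. upward
directed family, and `L¹`-boundedness bounds their integrals. Hence they have an essential
supremum `Z`, the limit of an increasing sequence `E[fₙ | F₀]`, and since `(Y₀, Y₀ fₙ) ∈ 𝒴`,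
monotone convergence gives `E[Y₀ Z] ≤ sup E[Y_i]`. For `Y ∈ 𝒴` the ratio `Y₁ / Y₀` lies in `𝒟`,
so `E[Y₁ | F₀] = Y₀ E[Y₁ / Y₀ | F₀] ≤ Y₀ Z`; finally `Z ≥ E[Y*₁ | F₀] > 0`.
-/

open MeasureTheory Set
open scoped ENNReal

section EssentialSupremum

variable {Ω : Type*} {m : MeasurableSpace Ω} {μ : Measure Ω}

theorem lintegral_iSup_le_of_ae_le_succ {g : ℕ → Ω → ℝ≥0∞} (hg : ∀ n, AEMeasurable (g n) μ)
    (hmono : ∀ n, g n ≤ᵐ[μ] g (n + 1)) {c : ℝ≥0∞} (hc : ∀ n, ∫⁻ ω, g n ω ∂μ ≤ c) :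
    ∫⁻ ω, ⨆ n, g n ω ∂μ ≤ c := by
  rw [lintegral_iSup' hg ((ae_all_iff.2 hmono).mono fun _ h => monotone_nat_of_le_succ h)]
  exact iSup_le hc

theorem exists_seq_ae_le_iSup_of_directed {ι : Type*} [Nonempty ι] {G : ι → Ω → ℝ≥0∞}
    (hG : ∀ i, AEMeasurable (G i) μ) (hdir : ∀ i j, ∃ k, G i ≤ᵐ[μ] G k ∧ G j ≤ᵐ[μ] G k)
    (hfin : ⨆ i, ∫⁻ ω, G i ω ∂μ ≠ ∞) :
    ∃ v : ℕ → ι, (∀ n, G (v n) ≤ᵐ[μ] G (v (n + 1))) ∧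
      ∀ i, G i ≤ᵐ[μ] fun ω => ⨆ n, G (v n) ω := by
  choose k hki hkj using hdir
  set T : ι → ℝ≥0∞ := fun i => ∫⁻ ω, G i ω ∂μ
  obtain ⟨u, -, hu_lim, hu_mem⟩ :=
    exists_seq_tendsto_sSup (range_nonempty T) (OrderTop.bddAbove _)
  choose i hi using hu_mem
  -- `v (n + 1)` dominates both `v n` and the `n + 1`-st term of a maximising sequence
  let v : ℕ → ι := fun n => Nat.rec (i 0) (fun n w => k w (i (n + 1))) n
  have hv_mono : ∀ n, G (v n) ≤ᵐ[μ] G (v (n + 1)) := fun n => hki _ _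
  have hiv : ∀ n, G (i n) ≤ᵐ[μ] G (v n)
    | 0 => ae_of_all _ fun _ => le_rfl
    | n + 1 => hkj _ _
  set Φ : Ω → ℝ≥0∞ := fun ω => ⨆ n, G (v n) ω
  have hΦ_le : ∫⁻ ω, Φ ω ∂μ ≤ ⨆ j, T j :=
    lintegral_iSup_le_of_ae_le_succ (fun n => hG _) hv_mono fun n => le_iSup T (v n)
  have hle_Φ : ⨆ j, T j ≤ ∫⁻ ω, Φ ω ∂μ := by
    refine le_of_tendsto' hu_lim fun n => ?_
    rw [← hi n]
    refine lintegral_mono_ae ?_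
    filter_upwards [hiv n] with ω hω using hω.trans (le_iSup (fun n => G (v n) ω) n)
  refine ⟨v, hv_mono, fun j => ?_⟩
  -- `Φ` already has the largest possible integral, so raising it to `G j ⊔ Φ` is invisible a.e.
  have hsup : Φ =ᵐ[μ] fun ω => G j ω ⊔ Φ ω := by
    refine ae_eq_of_ae_le_of_lintegral_le (ae_of_all _ fun _ => le_sup_right)
      (ne_top_of_le_ne_top hfin hΦ_le) ((hG j).sup (AEMeasurable.iSup fun n => hG _)) ?_
    simp_rw [Φ, sup_iSup]
    refine (lintegral_iSup_le_of_ae_le_succ (fun n => (hG j).sup (hG _))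
      (fun n => (hv_mono n).mono fun _ h => sup_le_sup_left h _) fun n => ?_).trans hle_Φ
    refine le_trans (lintegral_mono_ae ?_) (le_iSup T (k j (v n)))
    filter_upwards [hki j (v n), hkj j (v n)] with ω h1 h2 using sup_le h1 h2
  filter_upwards [hsup] with ω hω
  exact le_sup_left.trans hω.ge

end EssentialSupremum

section ConditionalExpectation

variable {Ω : Type*} {m m₀ : MeasurableSpace Ω} {μ : Measure Ω}

theorem lintegral_ofReal_condExp (hm : m ≤ m₀) [SigmaFinite (μ.trim hm)] {f : Ω → ℝ}
    (hf : Integrable f μ) (hf0 : 0 ≤ᵐ[μ] f) :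
    ∫⁻ ω, ENNReal.ofReal (μ[f|m] ω) ∂μ = ∫⁻ ω, ENNReal.ofReal (f ω) ∂μ := by
  rw [← ofReal_integral_eq_lintegral_ofReal integrable_condExp (condExp_nonneg hf0),
    integral_condExp hm, ofReal_integral_eq_lintegral_ofReal hf hf0]

theorem condExp_pos_of_pos (hm : m ≤ m₀) [SigmaFinite (μ.trim hm)] {f : Ω → ℝ}
    (hf : Integrable f μ) (hpos : ∀ᵐ ω ∂μ, 0 < f ω) : ∀ᵐ ω ∂μ, 0 < μ[f|m] ω := by
  set A := {ω | μ[f|m] ω ≤ 0}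
  have hA : MeasurableSet[m] A :=
    measurableSet_le stronglyMeasurable_condExp.measurable measurable_const
  have hf_int_A : ∫ ω in A, f ω ∂μ = 0 := by
    refine le_antisymm ?_ (setIntegral_nonneg_ae (hm _ hA) (hpos.mono fun _ h _ => h.le))
    rw [← setIntegral_condExp hm hf hA]
    exact setIntegral_nonpos (hm _ hA) fun _ h => h
  have hf_zero : f =ᵐ[μ.restrict A] 0 :=
    (integral_eq_zero_iff_of_nonneg_ae (ae_restrict_of_ae (hpos.mono fun _ h => h.le))
      hf.restrict).1 hf_int_A
  have hA_null : μ A = 0 := by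
    have hfalse : ∀ᵐ ω ∂μ.restrict A, False := by
      filter_upwards [hf_zero, ae_restrict_of_ae hpos] with ω h0 hpos
      exact (h0 ▸ hpos).false
    simpa [ae_iff] using hfalse
  simpa only [ae_iff, not_lt] using hA_null

theorem condExp_piecewise (hm : m ≤ m₀) {f g : Ω → ℝ} (hf : Integrable f μ)
    (hg : Integrable g μ) {s : Set Ω} [DecidablePred (· ∈ s)] (hs : MeasurableSet[m] s) :
    μ[s.piecewise f g|m] =ᵐ[μ] s.piecewise (μ[f|m]) (μ[g|m]) := by
  have hsplit (a b : Ω → ℝ) : s.piecewise a b = s.indicator a + sᶜ.indicator b := by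
    ext ω; by_cases h : ω ∈ s <;> simp [h]
  rw [hsplit, hsplit]
  filter_upwards [condExp_add (hf.indicator (hm _ hs)) (hg.indicator (hm _ hs.compl)) m,
    condExp_indicator hf hs, condExp_indicator hg hs.compl] with ω h1 h2 h3
  rw [h1, Pi.add_apply, h2, h3, Pi.add_apply]

open scoped Classical in
theorem exists_condExp_ae_eq_sup_of_piecewise_mem (hm : m ≤ m₀) {D : Set (Ω → ℝ)}
    (hD_int : ∀ f ∈ D, Integrable f μ)
    (hD : ∀ f ∈ D, ∀ g ∈ D, ∀ s, MeasurableSet[m] s → s.piecewise f g ∈ D)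
    {f g : Ω → ℝ} (hf : f ∈ D) (hg : g ∈ D) :
    ∃ h ∈ D, μ[h|m] =ᵐ[μ] μ[f|m] ⊔ μ[g|m] := by
  set s := {ω | μ[g|m] ω ≤ μ[f|m] ω}
  have hs : MeasurableSet[m] s :=
    measurableSet_le stronglyMeasurable_condExp.measurable stronglyMeasurable_condExp.measurable
  refine ⟨s.piecewise f g, hD f hf g hg s hs, ?_⟩
  filter_upwards [condExp_piecewise hm (hD_int f hf) (hD_int g hg) hs] with ω hω
  rw [hω]
  by_cases h : ω ∈ s
  · simpa [h] using show μ[g|m] ω ≤ μ[f|m] ω from h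
  · simpa [h] using (not_le.1 h).le

theorem setIntegral_le_of_condExp_le (hm : m ≤ m₀) [SigmaFinite (μ.trim hm)] {f g : Ω → ℝ}
    (hf : Integrable f μ) (hg : Integrable g μ) (hle : μ[f|m] ≤ᵐ[μ] g) {A : Set Ω}
    (hA : MeasurableSet[m] A) : ∫ ω in A, f ω ∂μ ≤ ∫ ω in A, g ω ∂μ := by
  rw [← setIntegral_condExp hm hf hA]
  exact setIntegral_mono_ae integrable_condExp.integrableOn hg.integrableOn hle

theorem condExp_ae_eq_mul_condExp_div {a b : Ω → ℝ} (ha : StronglyMeasurable[m] a)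
    (hb : Integrable b μ) (hba : Integrable (b / a) μ) (hzero : ∀ᵐ ω ∂μ, a ω = 0 → b ω = 0) :
    μ[b|m] =ᵐ[μ] a * μ[b / a|m] := by
  have hb_eq : b =ᵐ[μ] a * (b / a) := by
    filter_upwards [hzero] with ω hω
    by_cases h : a ω = 0
    · simp [h, hω h]
    · simp [mul_div_cancel₀ _ h]
  exact (condExp_congr_ae hb_eq).trans
    (condExp_mul_of_stronglyMeasurable_left ha (hb.congr hb_eq) hba)

end ConditionalExpectation

/-- Lean's `x / 0 = 0` realises the convention `0 / 0 = 0`. -/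
def IsForkConvex {Ω : Type*} (F0 : MeasurableSpace Ω) (𝒴 : Set ((Ω → ℝ) × (Ω → ℝ))) : Prop :=
  ∀ Y1 ∈ 𝒴, ∀ Y2 ∈ 𝒴, ∀ Y3 ∈ 𝒴, ∀ l : Ω → ℝ, Measurable[F0] l → (∀ ω, l ω ∈ Icc (0 : ℝ) 1) →
    (Y1.1, fun ω => Y1.1 ω * (l ω * (Y2.2 ω / Y2.1 ω) + (1 - l ω) * (Y3.2 ω / Y3.1 ω))) ∈ 𝒴

def unitFiber {Ω : Type*} (𝒴 : Set ((Ω → ℝ) × (Ω → ℝ))) : Set (Ω → ℝ) :=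
  {f | ((fun _ => 1), f) ∈ 𝒴}

namespace IsForkConvex

variable {Ω : Type*} {m : MeasurableSpace Ω} {P : Measure Ω} {F0 : MeasurableSpace Ω}
  {𝒴 : Set ((Ω → ℝ) × (Ω → ℝ))}

theorem mul_mem (h𝒴 : IsForkConvex F0 𝒴) {Y : (Ω → ℝ) × (Ω → ℝ)} (hY : Y ∈ 𝒴) {f : Ω → ℝ}
    (hf : f ∈ unitFiber 𝒴) : (Y.1, Y.1 * f) ∈ 𝒴 := by
  simpa [Pi.mul_def] using h𝒴 Y hY _ hf _ hf 1 measurable_const fun _ => ⟨zero_le_one, le_rfl⟩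

theorem div_mem_unitFiber (h𝒴 : IsForkConvex F0 𝒴) {Y : (Ω → ℝ) × (Ω → ℝ)} (hY : Y ∈ 𝒴)
    {f : Ω → ℝ} (hf : f ∈ unitFiber 𝒴) : Y.2 / Y.1 ∈ unitFiber 𝒴 := by
  simpa [unitFiber, Pi.div_def] using
    h𝒴 _ hf Y hY Y hY 1 measurable_const fun _ => ⟨zero_le_one, le_rfl⟩

theorem piecewise_mem_unitFiber (h𝒴 : IsForkConvex F0 𝒴) {f g : Ω → ℝ}
    (hf : f ∈ unitFiber 𝒴) (hg : g ∈ unitFiber 𝒴) {s : Set Ω} [DecidablePred (· ∈ s)]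
    (hs : MeasurableSet[F0] s) : s.piecewise f g ∈ unitFiber 𝒴 := by
  have hl : ∀ ω, s.indicator (fun _ => (1 : ℝ)) ω ∈ Icc (0 : ℝ) 1 := fun ω => by
    by_cases h : ω ∈ s <;> simp [h]
  show (_, _) ∈ 𝒴
  convert h𝒴 _ hf _ hf _ hg _ (measurable_const.indicator hs) hl using 2
  ext ω
  by_cases h : ω ∈ s <;> simp [h]

variable [IsFiniteMeasure P]

theorem exists_condExp_le_ennreal (h𝒴 : IsForkConvex F0 𝒴) (hm : F0 ≤ m)
    (hmeas : ∀ Y ∈ 𝒴, Measurable[F0] Y.1) (hnonneg : ∀ Y ∈ 𝒴, ∀ ω, 0 ≤ Y.1 ω ∧ 0 ≤ Y.2 ω)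
    (hint : ∀ Y ∈ 𝒴, Integrable Y.2 P) {S : ℝ≥0∞}
    (hS : ∀ Y ∈ 𝒴, ∫⁻ ω, ENNReal.ofReal (Y.2 ω) ∂P ≤ S) (hS_ne_top : S ≠ ∞)
    (hne : (unitFiber 𝒴).Nonempty) :
    ∃ Φ : Ω → ℝ≥0∞, Measurable[F0] Φ ∧
      (∀ f ∈ unitFiber 𝒴, ∀ᵐ ω ∂P, ENNReal.ofReal (P[f|F0] ω) ≤ Φ ω) ∧
      ∀ Y ∈ 𝒴, ∫⁻ ω, ENNReal.ofReal (Y.1 ω) * Φ ω ∂P ≤ S := by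
  set D := unitFiber 𝒴
  have : Nonempty D := hne.to_subtype
  let G : D → Ω → ℝ≥0∞ := fun f ω => ENNReal.ofReal (P[(f : Ω → ℝ)|F0] ω)
  have hG_meas (f : D) : Measurable[F0] (G f) :=
    stronglyMeasurable_condExp.measurable.ennreal_ofReal
  have hG_aemeas (f : D) : AEMeasurable (G f) P := ((hG_meas f).mono hm le_rfl).aemeasurable
  have hbound : ∀ Y ∈ 𝒴, ∀ f : D, ∫⁻ ω, ENNReal.ofReal (Y.1 ω) * G f ω ∂P ≤ S := by
    intro Y hY f
    have hYf := h𝒴.mul_mem hY f.2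
    calc ∫⁻ ω, ENNReal.ofReal (Y.1 ω) * G f ω ∂P
        = ∫⁻ ω, ENNReal.ofReal (P[Y.1 * (f : Ω → ℝ)|F0] ω) ∂P := by
          refine lintegral_congr_ae ?_
          filter_upwards [condExp_mul_of_stronglyMeasurable_left (hmeas Y hY).stronglyMeasurable
            (hint _ hYf) (hint _ f.2)] with ω hω
          rw [hω, Pi.mul_apply, ENNReal.ofReal_mul (hnonneg Y hY ω).1]
      _ = ∫⁻ ω, ENNReal.ofReal ((Y.1 * (f : Ω → ℝ)) ω) ∂P :=
          lintegral_ofReal_condExp hm (hint _ hYf) (ae_of_all _ fun ω => (hnonneg _ hYf ω).2)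
      _ ≤ S := hS _ hYf
  have hG_int : ⨆ f : D, ∫⁻ ω, G f ω ∂P ≠ ∞ := by
    obtain ⟨f₀, hf₀⟩ := hne
    refine ne_top_of_le_ne_top hS_ne_top (iSup_le fun f => ?_)
    simpa using hbound _ hf₀ f
  have hdir (f g : D) : ∃ h : D, G f ≤ᵐ[P] G h ∧ G g ≤ᵐ[P] G h := by
    obtain ⟨h, hh, hsup⟩ := exists_condExp_ae_eq_sup_of_piecewise_mem hm (fun f hf => hint _ hf)
      (fun f hf g hg s hs => by classical exact h𝒴.piecewise_mem_unitFiber hf hg hs) f.2 g.2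
    refine ⟨⟨h, hh⟩, ?_, ?_⟩ <;> filter_upwards [hsup] with ω hω <;>
      exact ENNReal.ofReal_le_ofReal (hω ▸ by simp)
  obtain ⟨v, hv_mono, hv_dom⟩ := exists_seq_ae_le_iSup_of_directed hG_aemeas hdir hG_int
  refine ⟨fun ω => ⨆ n, G (v n) ω, Measurable.iSup fun n => hG_meas _,
    fun f hf => hv_dom ⟨f, hf⟩, fun Y hY => ?_⟩
  simp_rw [ENNReal.mul_iSup]
  exact lintegral_iSup_le_of_ae_le_succ
    (fun n => (((hmeas Y hY).mono hm le_rfl).ennreal_ofReal.aemeasurable).mul (hG_aemeas _))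
    (fun n => (hv_mono n).mono fun _ h => mul_le_mul_right h _) fun n => hbound Y hY (v n)

theorem exists_condExp_le (h𝒴 : IsForkConvex F0 𝒴) (hm : F0 ≤ m)
    (hmeas : ∀ Y ∈ 𝒴, Measurable[F0] Y.1) (hnonneg : ∀ Y ∈ 𝒴, ∀ ω, 0 ≤ Y.1 ω ∧ 0 ≤ Y.2 ω)
    (hint : ∀ Y ∈ 𝒴, Integrable Y.2 P) {S : ℝ≥0∞}
    (hS : ∀ Y ∈ 𝒴, ∫⁻ ω, ENNReal.ofReal (Y.2 ω) ∂P ≤ S) (hS_ne_top : S ≠ ∞)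
    (hne : (unitFiber 𝒴).Nonempty) :
    ∃ Z : Ω → ℝ, Measurable[F0] Z ∧ (∀ ω, 0 ≤ Z ω) ∧
      (∀ f ∈ unitFiber 𝒴, P[f|F0] ≤ᵐ[P] Z) ∧
      ∀ Y ∈ 𝒴, ∫⁻ ω, ENNReal.ofReal (Y.1 ω * Z ω) ∂P ≤ S := by
  obtain ⟨Φ, hΦ_meas, hΦ_dom, hΦ_int⟩ :=
    h𝒴.exists_condExp_le_ennreal hm hmeas hnonneg hint hS hS_ne_top hne
  obtain ⟨f₀, hf₀⟩ := hne
  have hΦ_lt_top : ∀ᵐ ω ∂P, Φ ω < ∞ := ae_lt_top (hΦ_meas.mono hm le_rfl)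
    (ne_top_of_le_ne_top hS_ne_top (by simpa using hΦ_int _ hf₀))
  refine ⟨fun ω => (Φ ω).toReal, hΦ_meas.ennreal_toReal, fun _ => ENNReal.toReal_nonneg,
    fun f hf => ?_, fun Y hY => ?_⟩
  · filter_upwards [hΦ_dom f hf, hΦ_lt_top] with ω hle hlt
    exact (ENNReal.ofReal_le_iff_le_toReal hlt.ne).1 hle
  · refine le_trans (le_of_eq (lintegral_congr_ae ?_)) (hΦ_int Y hY)
    filter_upwards [hΦ_lt_top] with ω hω
    rw [ENNReal.ofReal_mul (hnonneg Y hY ω).1, ENNReal.ofReal_toReal hω.ne]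

end IsForkConvex

/-- (One-period supermartingale density.) For an `L¹`-bounded, fork-convex
family `𝒴` of pairs of nonnegative random variables adapted to `(F₀, F₁)` containing a pair
`(1, Y*₁)` with `Y*₁ > 0` a.s., there is a strictly positive `F₀`-measurable `Z` such that
`(Y₀ Z, Y₁)` is a supermartingale for every `Y ∈ 𝒴`, and `Z` can be chosen with
`E[Y₀ Z] ≤ sup_{Y ∈ 𝒴} max_{i=0,1} E[Y_i]`. -/
theorem statement4 {Ω : Type*} {m : MeasurableSpace Ω} (P : Measure Ω) [IsProbabilityMeasure P]
    (F0 F1 : MeasurableSpace Ω) (h01 : F0 ≤ F1) (h1m : F1 ≤ m)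
    (𝒴 : Set ((Ω → ℝ) × (Ω → ℝ)))
    (hadapted : ∀ Y ∈ 𝒴, Measurable[F0] Y.1 ∧ Measurable[F1] Y.2)
    (hnonneg : ∀ Y ∈ 𝒴, ∀ ω, 0 ≤ Y.1 ω ∧ 0 ≤ Y.2 ω)
    (hL1 : (⨆ Y ∈ 𝒴, max (∫⁻ ω, ENNReal.ofReal (Y.1 ω) ∂P)
        (∫⁻ ω, ENNReal.ofReal (Y.2 ω) ∂P)) < ⊤)
    (hzero : ∀ Y ∈ 𝒴, ∀ᵐ ω ∂P, Y.1 ω = 0 → Y.2 ω = 0)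
    (hfork : ∀ Y1 ∈ 𝒴, ∀ Y2 ∈ 𝒴, ∀ Y3 ∈ 𝒴, ∀ l : Ω → ℝ,
      Measurable[F0] l → (∀ ω, l ω ∈ Icc (0 : ℝ) 1) →
      (Y1.1, fun ω => Y1.1 ω * (l ω * (Y2.2 ω / Y2.1 ω) + (1 - l ω) * (Y3.2 ω / Y3.1 ω))) ∈ 𝒴)
    (hstar : ∃ Ys ∈ 𝒴, Ys.1 = (fun _ => (1 : ℝ)) ∧ ∀ᵐ ω ∂P, 0 < Ys.2 ω) :
    ∃ Z : Ω → ℝ, Measurable[F0] Z ∧ (∀ᵐ ω ∂P, 0 < Z ω) ∧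
      ∀ Y ∈ 𝒴,
        Integrable (fun ω => Y.1 ω * Z ω) P ∧
        (∀ A : Set Ω, MeasurableSet[F0] A →
          ∫ ω in A, Y.2 ω ∂P ≤ ∫ ω in A, Y.1 ω * Z ω ∂P) ∧
        ∫⁻ ω, ENNReal.ofReal (Y.1 ω * Z ω) ∂P ≤
          ⨆ Y' ∈ 𝒴, max (∫⁻ ω, ENNReal.ofReal (Y'.1 ω) ∂P)
            (∫⁻ ω, ENNReal.ofReal (Y'.2 ω) ∂P) := by
  obtain ⟨Ys, hYs, hYs1, hYs_pos⟩ := hstar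
  have hm : F0 ≤ m := h01.trans h1m
  set S := ⨆ Y ∈ 𝒴, max (∫⁻ ω, ENNReal.ofReal (Y.1 ω) ∂P) (∫⁻ ω, ENNReal.ofReal (Y.2 ω) ∂P)
  have hS : ∀ Y ∈ 𝒴, ∫⁻ ω, ENNReal.ofReal (Y.2 ω) ∂P ≤ S := fun Y hY =>
    (le_max_right _ _).trans (le_biSup (fun Y : (Ω → ℝ) × (Ω → ℝ) =>
      max (∫⁻ ω, ENNReal.ofReal (Y.1 ω) ∂P) (∫⁻ ω, ENNReal.ofReal (Y.2 ω) ∂P)) hY)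
  have hint : ∀ Y ∈ 𝒴, Integrable Y.2 P := fun Y hY =>
    (lintegral_ofReal_ne_top_iff_integrable ((hadapted Y hY).2.mono h1m le_rfl).aestronglyMeasurable
      (ae_of_all _ fun ω => (hnonneg Y hY ω).2)).1 (ne_top_of_le_ne_top hL1.ne (hS Y hY))
  have hYs_mem : Ys.2 ∈ unitFiber 𝒴 := by simpa [unitFiber, ← hYs1] using hYs
  obtain ⟨Z, hZ_meas, hZ_nonneg, hZ_dom, hZ_lin⟩ := IsForkConvex.exists_condExp_le hfork hm
    (fun Y hY => (hadapted Y hY).1) hnonneg hint hS hL1.ne ⟨_, hYs_mem⟩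
  refine ⟨Z, hZ_meas, ?_, fun Y hY => ?_⟩
  · filter_upwards [condExp_pos_of_pos hm (hint Ys hYs) hYs_pos, hZ_dom _ hYs_mem]
      with ω hpos hle using hpos.trans_le hle
  have hZ_int : Integrable (fun ω => Y.1 ω * Z ω) P :=
    (lintegral_ofReal_ne_top_iff_integrable
      (((hadapted Y hY).1.mul hZ_meas).mono hm le_rfl).aestronglyMeasurable
      (ae_of_all _ fun ω => mul_nonneg (hnonneg Y hY ω).1 (hZ_nonneg ω))).1
      (ne_top_of_le_ne_top hL1.ne (hZ_lin Y hY))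
  refine ⟨hZ_int, fun A hA => setIntegral_le_of_condExp_le hm (hint Y hY) hZ_int ?_ hA, hZ_lin Y hY⟩
  have hdiv := IsForkConvex.div_mem_unitFiber hfork hY hYs_mem
  filter_upwards [condExp_ae_eq_mul_condExp_div (hadapted Y hY).1.stronglyMeasurable (hint Y hY)
    (hint _ hdiv) (hzero Y hY), hZ_dom _ hdiv] with ω heq hle
  rw [heq]
  exact mul_le_mul_of_nonneg_left hle (hnonneg Y hY ω).1
end

section
/- Let (Ω, F, P) be a probability space and, for every n ∈ ℕ, let (Aⁿ_k : 1 ≤ k ≤ 2ⁿ) be a measurable partition of Ω with P(Aⁿ_k) = 2^{−n} for all k. Define Yⁿ_k = (2ⁿ/n) 1_{Aⁿ_k} and let F₀ = σ(Aⁿ_k : 1 ≤ k ≤ 2ⁿ, n ∈ ℕ). Then: (i) the family (Yⁿ_k : n, k) is uniformly integrable; (ii) if Z is a nonnegative random variable such that E[1_A Yⁿ_k] ≤ E[1_A Z] for every A ∈ F₀ and all n, k, then E[Z] = ∞. -/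
open MeasureTheory Filter Set
open scoped ENNReal Topology

/-!
Each `Yⁿ_k` is the constant `2ⁿ/n` on a set of probability `2⁻ⁿ`, so it has expectation `1/n`,
which is small for large `n`, while for small `n` it is bounded; this gives uniform
integrability. On the other hand, testing the domination hypothesis on `A = Aⁿ_k ∈ F₀` gives
`E[1_{Aⁿ_k} Z] ≥ 1/n` for each of the `2ⁿ` cells of the `n`-th partition, so `E[Z] ≥ 2ⁿ/n` for
every `n`.
-/

theorem Nat.mul_two_mul_add_two_le_two_pow (m : ℕ) : m * (2 * m + 2) ≤ 2 ^ (2 * m + 2) := by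
  have hm : m < 2 ^ m := Nat.lt_two_pow_self
  have hpow : 2 ^ (2 * m + 2) = 4 * (2 ^ m * 2 ^ m) := by ring
  rw [hpow]
  nlinarith

theorem ENNReal.eq_top_of_forall_two_pow_div_le {x : ℝ≥0∞}
    (h : ∀ n : ℕ, 2 ^ (n + 1) / (n + 1) ≤ x) : x = ⊤ := by
  by_contra hx
  obtain ⟨m, hm⟩ := ENNReal.exists_nat_gt hx
  have hle : (m : ℝ≥0∞) ≤ 2 ^ (2 * m + 1 + 1) / ((2 * m + 1 : ℕ) + 1) := by
    rw [ENNReal.le_div_iff_mul_le (by simp) (by simp)]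
    exact_mod_cast Nat.mul_two_mul_add_two_le_two_pow m
  exact (hle.trans (h (2 * m + 1))).not_gt hm

theorem ENNReal.ofReal_two_pow_div_mul_one_div_two_pow (n : ℕ) :
    ENNReal.ofReal ((2 ^ (n + 1) : ℝ) / (n + 1)) * (1 / 2 ^ (n + 1)) = 1 / (n + 1) := by
  have htwo : (1 / 2 ^ (n + 1) : ℝ≥0∞) = ENNReal.ofReal (1 / 2 ^ (n + 1)) := by
    rw [ENNReal.ofReal_div_of_pos (by positivity), ENNReal.ofReal_one,
      ENNReal.ofReal_pow zero_le_two, ENNReal.ofReal_ofNat]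
  have hsucc : 1 / ((n : ℝ≥0∞) + 1) = ENNReal.ofReal (1 / (n + 1)) := by
    rw [ENNReal.ofReal_div_of_pos (by positivity), ENNReal.ofReal_one]
    norm_cast
  rw [htwo, hsucc, ← ENNReal.ofReal_mul (by positivity)]
  congr 1
  field_simp

section

variable {Ω : Type*}

theorem ofReal_mul_indicator_one (c : ℝ) (s : Set Ω) (ω : Ω) :
    ENNReal.ofReal (c * s.indicator 1 ω) = s.indicator (fun _ => ENNReal.ofReal c) ω := by
  by_cases h : ω ∈ s <;> simp [h]

theorem abs_mul_indicator_one_le {c : ℝ} (hc : 0 ≤ c) (s : Set Ω) (ω : Ω) :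
    |c * s.indicator 1 ω| ≤ c := by
  by_cases h : ω ∈ s <;> simp [h, abs_of_nonneg hc, hc]

variable [MeasurableSpace Ω]

theorem lintegral_ofReal_abs_mul_indicator_one {c : ℝ} (hc : 0 ≤ c) {s : Set Ω}
    (hs : MeasurableSet s) (P : Measure Ω) :
    ∫⁻ ω, ENNReal.ofReal |c * s.indicator 1 ω| ∂P = ENNReal.ofReal c * P s := by
  have habs : ∀ ω, |c * s.indicator 1 ω| = c * s.indicator 1 ω := fun ω =>
    abs_of_nonneg (mul_nonneg hc (indicator_nonneg (fun _ _ => zero_le_one) ω))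
  simp only [habs, ofReal_mul_indicator_one, lintegral_indicator_const hs]

theorem setLIntegral_ofReal_mul_indicator_one (c : ℝ) {s : Set Ω} (hs : MeasurableSet s)
    (P : Measure Ω) :
    ∫⁻ ω in s, ENNReal.ofReal (c * s.indicator 1 ω) ∂P = ENNReal.ofReal c * P s := by
  simp only [ofReal_mul_indicator_one, lintegral_indicator_const hs, Measure.restrict_apply hs,
    Set.inter_self]

theorem tendsto_iSup_setLIntegral_abs_ge_of_bounded_or_small {ι : Type*} {κ : ι → Type*}
    (P : Measure Ω) (f : (i : ι) → κ i → Ω → ℝ)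
    (h : ∀ ε > 0, ∃ M, ∀ i j, (∀ ω, |f i j ω| < M) ∨ ∫⁻ ω, ENNReal.ofReal |f i j ω| ∂P ≤ ε) :
    Tendsto (fun M : ℝ => ⨆ i, ⨆ j, ∫⁻ ω in {ω | M ≤ |f i j ω|}, ENNReal.ofReal |f i j ω| ∂P)
      atTop (𝓝 0) := by
  rw [ENNReal.tendsto_nhds_zero]
  intro ε hε
  obtain ⟨M₀, hM₀⟩ := h ε hε
  filter_upwards [eventually_ge_atTop M₀] with M hM
  refine iSup₂_le fun i j => ?_
  rcases hM₀ i j with hbdd | hsmall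
  · have hempty : {ω | M ≤ |f i j ω|} = ∅ :=
      eq_empty_of_forall_notMem fun ω hω => (hbdd ω).not_ge (hM.trans hω)
    simp [hempty]
  · exact (setLIntegral_le_lintegral _ _).trans hsmall

theorem card_mul_le_lintegral_of_partition {ι : Type*} [Fintype ι] {P : Measure Ω}
    {A : ι → Set Ω} (hmeas : ∀ i, MeasurableSet (A i))
    (hdisj : Pairwise fun i j => Disjoint (A i) (A j)) (hcover : ⋃ i, A i = univ)
    {f : Ω → ℝ≥0∞} {a : ℝ≥0∞} (ha : ∀ i, a ≤ ∫⁻ ω in A i, f ω ∂P) :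
    Fintype.card ι * a ≤ ∫⁻ ω, f ω ∂P := by
  calc (Fintype.card ι : ℝ≥0∞) * a = ∑ _i, a := by simp
    _ ≤ ∑ i, ∫⁻ ω in A i, f ω ∂P := Finset.sum_le_sum fun i _ => ha i
    _ = ∫⁻ ω in ⋃ i, A i, f ω ∂P := by rw [lintegral_iUnion hmeas hdisj, tsum_fintype]
    _ = ∫⁻ ω, f ω ∂P := by rw [hcover, setLIntegral_univ]

end

theorem statement6_general {Ω : Type*} [MeasurableSpace Ω] (P : Measure Ω)
    (A : (n : ℕ) → Fin (2 ^ (n + 1)) → Set Ω)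
    (hmeas : ∀ n k, MeasurableSet (A n k))
    (hdisj : ∀ n, Pairwise fun k l => Disjoint (A n k) (A n l))
    (hcover : ∀ n, ⋃ k, A n k = univ)
    (hprob : ∀ n k, P (A n k) = 1 / 2 ^ (n + 1))
    (Y : (n : ℕ) → Fin (2 ^ (n + 1)) → Ω → ℝ)
    (hY : ∀ n k ω, Y n k ω = (2 ^ (n + 1) : ℝ) / (n + 1) * (A n k).indicator 1 ω) :
    Tendsto (fun M : ℝ => ⨆ n, ⨆ k, ∫⁻ ω in {ω | M ≤ |Y n k ω|}, ENNReal.ofReal |Y n k ω| ∂P)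
      atTop (𝓝 0) ∧
    ∀ Z : Ω → ℝ, Measurable Z → (∀ ω, 0 ≤ Z ω) →
      (∀ n k, ∀ A0 : Set Ω,
        MeasurableSet[MeasurableSpace.generateFrom {s | ∃ n' k', s = A n' k'}] A0 →
        ∫⁻ ω in A0, ENNReal.ofReal (Y n k ω) ∂P ≤ ∫⁻ ω in A0, ENNReal.ofReal (Z ω) ∂P) →
      ∫⁻ ω, ENNReal.ofReal (Z ω) ∂P = ⊤ := by
  obtain rfl : Y = fun n k ω => (2 ^ (n + 1) : ℝ) / (n + 1) * (A n k).indicator 1 ω :=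
    funext fun n => funext fun k => funext (hY n k)
  have hc : ∀ n : ℕ, 0 ≤ (2 ^ (n + 1) : ℝ) / (n + 1) := fun n => by positivity
  have hmass : ∀ (n : ℕ) k,
      ENNReal.ofReal ((2 ^ (n + 1) : ℝ) / (n + 1)) * P (A n k) = 1 / (n + 1) :=
    fun n k => by rw [hprob, ENNReal.ofReal_two_pow_div_mul_one_div_two_pow]
  refine ⟨tendsto_iSup_setLIntegral_abs_ge_of_bounded_or_small P _ fun ε hε => ?_,
    fun Z _ _ hdom => ENNReal.eq_top_of_forall_two_pow_div_le fun n => ?_⟩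
  · obtain ⟨N, hN⟩ := ENNReal.exists_inv_nat_lt hε.ne'
    refine ⟨2 ^ (N + 1) + 1, fun n k => ?_⟩
    rcases le_or_gt n N with hn | hn
    · refine Or.inl fun ω => ?_
      calc _ ≤ (2 ^ (n + 1) : ℝ) / (n + 1) := abs_mul_indicator_one_le (hc n) _ _
        _ ≤ 2 ^ (n + 1) := div_le_self (by positivity) (by simp)
        _ ≤ 2 ^ (N + 1) := pow_le_pow_right₀ one_le_two (by omega)
        _ < 2 ^ (N + 1) + 1 := lt_add_one _
    · refine Or.inr ?_
      rw [lintegral_ofReal_abs_mul_indicator_one (hc n) (hmeas n k), hmass, one_div]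
      calc ((n : ℝ≥0∞) + 1)⁻¹ ≤ (N : ℝ≥0∞)⁻¹ := ENNReal.inv_le_inv.2 (by norm_cast; omega)
        _ ≤ ε := hN.le
  · have hcell : ∀ k, 1 / ((n : ℝ≥0∞) + 1) ≤ ∫⁻ ω in A n k, ENNReal.ofReal (Z ω) ∂P := by
      intro k
      rw [← hmass n k, ← setLIntegral_ofReal_mul_indicator_one _ (hmeas n k)]
      exact hdom n k _ (MeasurableSpace.measurableSet_generateFrom ⟨n, k, rfl⟩)
    simpa [div_eq_mul_inv] using
      card_mul_le_lintegral_of_partition (hmeas n) (hdisj n) (hcover n) hcell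

/-- For measurable partitions `(Aⁿ_k)_{1 ≤ k ≤ 2ⁿ}` (here indexed by
`n + 1`, i.e. `n ≥ 1`) of `Ω` with `P(Aⁿ_k) = 2⁻ⁿ`, `Yⁿ_k = (2ⁿ/n) 1_{Aⁿ_k}` and
`F₀ = σ(Aⁿ_k : n, k)`: (i) the family `(Yⁿ_k)` is uniformly integrable; (ii) if `Z ≥ 0`
satisfies `E[1_A Yⁿ_k] ≤ E[1_A Z]` for all `A ∈ F₀` and all `n, k`, then `E[Z] = ∞`. -/
theorem statement6 {Ω : Type*} [MeasurableSpace Ω] (P : Measure Ω) [IsProbabilityMeasure P]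
    (A : (n : ℕ) → Fin (2 ^ (n + 1)) → Set Ω)
    (hmeas : ∀ n k, MeasurableSet (A n k))
    (hdisj : ∀ n, Pairwise fun k l => Disjoint (A n k) (A n l))
    (hcover : ∀ n, ⋃ k, A n k = univ)
    (hprob : ∀ n k, P (A n k) = 1 / 2 ^ (n + 1))
    (Y : (n : ℕ) → Fin (2 ^ (n + 1)) → Ω → ℝ)
    (hY : ∀ n k ω, Y n k ω = (2 ^ (n + 1) : ℝ) / (n + 1) * (A n k).indicator 1 ω) :
    Tendsto (fun M : ℝ => ⨆ n, ⨆ k, ∫⁻ ω in {ω | M ≤ |Y n k ω|}, ENNReal.ofReal |Y n k ω| ∂P)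
      atTop (𝓝 0) ∧
    ∀ Z : Ω → ℝ, Measurable Z → (∀ ω, 0 ≤ Z ω) →
      (∀ n k, ∀ A0 : Set Ω,
        MeasurableSet[MeasurableSpace.generateFrom {s | ∃ n' k', s = A n' k'}] A0 →
        ∫⁻ ω in A0, ENNReal.ofReal (Y n k ω) ∂P ≤ ∫⁻ ω in A0, ENNReal.ofReal (Z ω) ∂P) →
      ∫⁻ ω, ENNReal.ofReal (Z ω) ∂P = ⊤ :=
  statement6_general P A hmeas hdisj hcover hprob Y hY
end

section
/- Let μ and ν be two probability measures on a filtered measurable space (Θ, 𝒢, (𝒢_t)_{t≥0}), let τ be a stopping time, and let (ζ_t)_{t≥0} be an adapted nonnegative process such that: (i) μ(τ = ∞) = 1; (ii) for every t ≥ 0 and every A ∈ 𝒢_t, ν(A ∩ {τ > t}) = ∫_A ζ_t dμ; and (iii) ζ_t converges μ-almost surely as t → ∞ to a limit ζ_∞ with μ(ζ_∞ > 0) = 1. Let 𝒢_∞ = ⋁_{t≥0} 𝒢_t be the σ-algebra generated by all the 𝒢_t. Then μ restricted to 𝒢_∞ is absolutely continuous with respect to ν restricted to 𝒢_∞. In fact,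 ν(A ∩ {τ = ∞}) ≥ ∫_A ζ_∞ dμ for every A ∈ 𝒢_∞. -/
open MeasureTheory Filter Set
open scoped ENNReal NNReal Topology symmDiff

/-!
The density `ζ_∞` is obtained from the identities `ν(A ∩ {τ > t + n}) = ∫_A ζ_{t+n} dμ`,
`A ∈ 𝒢_t`, by letting `n → ∞`: the left side decreases to `ν(A ∩ {τ = ∞})` and Fatou's lemma
bounds `∫_A ζ_∞ dμ` by the limit. Both sides of the resulting inequality are finite measures
in `A`, so it passes from the algebra `⋃ₜ 𝒢_t` to the σ-algebra `𝒢_∞` it generates. If now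
`ν(A) = 0`, then `∫_A ζ_∞ dμ = 0`, and since `ζ_∞ > 0` μ-a.s. this forces `μ(A) = 0`.
-/

theorem ENNReal.iInter_setOf_coe_add_natCast_lt (t : ℝ≥0) :
    ⋂ n : ℕ, {x : ℝ≥0∞ | ((t + n : ℝ≥0) : ℝ≥0∞) < x} = {⊤} := by
  ext x
  simp only [mem_iInter, mem_ofPred_eq, mem_singleton_iff]
  refine ⟨fun h => ?_, fun hx n => hx ▸ ENNReal.coe_lt_top⟩
  by_contra hx
  obtain ⟨n, hn⟩ := ENNReal.exists_nat_gt hx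
  refine (h n).not_gt (hn.trans_le ?_)
  exact_mod_cast le_add_self

theorem isSetAlgebra_setOf_exists_measurableSet {α ι : Type*} [Nonempty ι]
    {m : ι → MeasurableSpace α} (hm : Directed (· ≤ ·) m) :
    IsSetAlgebra {s : Set α | ∃ i, MeasurableSet[m i] s} where
  empty_mem := ⟨Classical.arbitrary ι, @MeasurableSet.empty _ (m _)⟩
  compl_mem := fun _ ⟨i, hs⟩ => ⟨i, hs.compl⟩
  union_mem := fun s u ⟨i, hs⟩ ⟨j, hu⟩ => by
    obtain ⟨k, hik, hjk⟩ := hm i j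
    exact ⟨k, (hik s hs).union (hjk u hu)⟩

namespace MeasureTheory

variable {α : Type*} {m : MeasurableSpace α}

theorem Measure.le_of_generateFrom_isSetAlgebra {𝒜 : Set (Set α)} (h𝒜 : IsSetAlgebra 𝒜)
    (hgen : m = MeasurableSpace.generateFrom 𝒜) {ρ₁ ρ₂ : Measure α} [IsFiniteMeasure ρ₂]
    (h : ∀ s ∈ 𝒜, ρ₁ s ≤ ρ₂ s) : ρ₁ ≤ ρ₂ := by
  have : IsFiniteMeasure ρ₁ := ⟨(h univ h𝒜.univ_mem).trans_lt (measure_lt_top ρ₂ univ)⟩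
  have hdense := Measure.MeasureDense.of_generateFrom_isSetAlgebra_finite (ρ₁ + ρ₂) h𝒜 hgen
  refine Measure.le_iff.2 fun s hs => ENNReal.le_of_forall_pos_le_add fun ε hε _ => ?_
  obtain ⟨t, ht, hst⟩ := hdense.approx s hs (measure_ne_top _ _) ε (by exact_mod_cast hε)
  rw [ENNReal.ofReal_coe_nnreal, Measure.add_apply] at hst
  calc ρ₁ s ≤ ρ₁ t + ρ₁ (s ∆ t) := tsub_le_iff_left.1 le_measure_symmDiff
    _ ≤ ρ₂ t + ρ₁ (s ∆ t) := add_le_add (h t ht) le_rfl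
    _ ≤ ρ₂ s + ρ₂ (t ∆ s) + ρ₁ (s ∆ t) := by gcongr; exact tsub_le_iff_left.1 le_measure_symmDiff
    _ = ρ₂ s + (ρ₁ (s ∆ t) + ρ₂ (s ∆ t)) := by rw [symmDiff_comm t s]; ring
    _ ≤ ρ₂ s + ε := by gcongr

theorem lintegral_le_of_tendsto_lintegral {μ : Measure α} {F : ℕ → α → ℝ≥0∞} {f : α → ℝ≥0∞}
    {c : ℝ≥0∞} (hF : ∀ n, AEMeasurable (F n) μ)
    (hlim : ∀ᵐ x ∂μ, Tendsto (fun n => F n x) atTop (𝓝 (f x)))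
    (hc : Tendsto (fun n => ∫⁻ x, F n x ∂μ) atTop (𝓝 c)) :
    ∫⁻ x, f x ∂μ ≤ c :=
  calc ∫⁻ x, f x ∂μ = ∫⁻ x, liminf (fun n => F n x) atTop ∂μ :=
        lintegral_congr_ae (hlim.mono fun _ hx => hx.liminf_eq.symm)
    _ ≤ liminf (fun n => ∫⁻ x, F n x ∂μ) atTop := lintegral_liminf_le' hF
    _ = c := hc.liminf_eq

theorem measure_eq_zero_of_setLIntegral_eq_zero {μ : Measure α} {f : α → ℝ≥0∞} {s : Set α}
    (hf : AEMeasurable f μ) (hpos : ∀ᵐ x ∂μ, f x ≠ 0) (hs : ∫⁻ x in s, f x ∂μ = 0) :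
    μ s = 0 := by
  rw [lintegral_eq_zero_iff' hf.restrict] at hs
  rw [← Measure.restrict_eq_zero, ← ae_eq_bot, ← eventually_false_iff_eq_bot]
  filter_upwards [hs, ae_restrict_of_ae hpos] with x hx0 hx using hx hx0

theorem tendsto_measure_inter_coe_add_natCast_lt (ν : Measure α) [IsFiniteMeasure ν]
    {τ : α → ℝ≥0∞} (hτ : ∀ t : ℝ≥0, MeasurableSet {x | τ x ≤ t}) {A : Set α}
    (hA : MeasurableSet A) (t : ℝ≥0) :
    Tendsto (fun n : ℕ => ν (A ∩ {x | ((t + n : ℝ≥0) : ℝ≥0∞) < τ x})) atTop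
      (𝓝 (ν (A ∩ {x | τ x = ⊤}))) := by
  have hmeas : ∀ n : ℕ, NullMeasurableSet (A ∩ {x | ((t + n : ℝ≥0) : ℝ≥0∞) < τ x}) ν := by
    intro n
    simpa only [compl_ofPred, not_le] using (hA.inter (hτ (t + n)).compl).nullMeasurableSet
  have hanti : Antitone fun n : ℕ => A ∩ {x | ((t + n : ℝ≥0) : ℝ≥0∞) < τ x} := by
    intro n k hnk
    refine inter_subset_inter_right _ fun x (hx : _ < τ x) => lt_of_le_of_lt ?_ hx
    exact_mod_cast add_le_add_right (Nat.cast_le.2 hnk) t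
  have hinter : ⋂ n : ℕ, A ∩ {x | ((t + n : ℝ≥0) : ℝ≥0∞) < τ x} = A ∩ {x | τ x = ⊤} := by
    rw [← inter_iInter, ← preimage_ofPred_eq (p := fun y : ℝ≥0∞ => y = ⊤),
      ofPred_eq_eq_singleton, ← ENNReal.iInter_setOf_coe_add_natCast_lt t, preimage_iInter]
    rfl
  rw [← hinter]
  exact tendsto_measure_iInter_atTop hmeas hanti ⟨0, measure_ne_top _ _⟩

end MeasureTheory

section KunitaYoeurp

variable {Θ : Type*} {m0 : MeasurableSpace Θ} {μ ν : Measure Θ} [IsFiniteMeasure ν]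
  {𝒢 : Filtration ℝ≥0 m0} {τ : Θ → ℝ≥0∞} {ζ : ℝ≥0 → Θ → ℝ} {ζinf : Θ → ℝ}

theorem setLIntegral_ofReal_le_measure_inter_eq_top_of_measurableSet_filtration
    (hτ : ∀ t : ℝ≥0, MeasurableSet {θ | τ θ ≤ t}) (hζ : ∀ t, Measurable (ζ t))
    (hν : ∀ t : ℝ≥0, ∀ A : Set Θ, MeasurableSet[𝒢 t] A →
      ν (A ∩ {θ | (t : ℝ≥0∞) < τ θ}) = ∫⁻ θ in A, ENNReal.ofReal (ζ t θ) ∂μ)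
    (hζconv : ∀ᵐ θ ∂μ, Tendsto (fun t => ζ t θ) atTop (𝓝 (ζinf θ)))
    {t : ℝ≥0} {A : Set Θ} (hA : MeasurableSet[𝒢 t] A) :
    ∫⁻ θ in A, ENNReal.ofReal (ζinf θ) ∂μ ≤ ν (A ∩ {θ | τ θ = ⊤}) := by
  refine lintegral_le_of_tendsto_lintegral (F := fun n θ => ENNReal.ofReal (ζ (t + n) θ))
    (fun n => (hζ _).ennreal_ofReal.aemeasurable) ?_ ?_
  · filter_upwards [ae_restrict_of_ae hζconv] with θ hθ
    exact (ENNReal.continuous_ofReal.tendsto _).comp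
      (hθ.comp (tendsto_atTop_mono (fun _ => le_add_self) tendsto_natCast_atTop_atTop))
  · simpa only [← hν _ A (𝒢.mono le_self_add A hA)] using
      tendsto_measure_inter_coe_add_natCast_lt ν hτ (𝒢.le t A hA) t

theorem setLIntegral_ofReal_le_measure_inter_eq_top
    (hτ : ∀ t : ℝ≥0, MeasurableSet {θ | τ θ ≤ t}) (hζ : ∀ t, Measurable (ζ t))
    (hν : ∀ t : ℝ≥0, ∀ A : Set Θ, MeasurableSet[𝒢 t] A →
      ν (A ∩ {θ | (t : ℝ≥0∞) < τ θ}) = ∫⁻ θ in A, ENNReal.ofReal (ζ t θ) ∂μ)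
    (hζconv : ∀ᵐ θ ∂μ, Tendsto (fun t => ζ t θ) atTop (𝓝 (ζinf θ)))
    {A : Set Θ} (hA : MeasurableSet[⨆ t, (𝒢 t : MeasurableSpace Θ)] A) :
    ∫⁻ θ in A, ENNReal.ofReal (ζinf θ) ∂μ ≤ ν (A ∩ {θ | τ θ = ⊤}) := by
  have hle : (⨆ t, (𝒢 t : MeasurableSpace Θ)) ≤ m0 := iSup_le 𝒢.le
  have hρ : (μ.withDensity fun θ => ENNReal.ofReal (ζinf θ)).trim hle
      ≤ (ν.restrict {θ | τ θ = ⊤}).trim hle := by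
    refine Measure.le_of_generateFrom_isSetAlgebra
      (isSetAlgebra_setOf_exists_measurableSet (Monotone.directed_le fun _ _ h => 𝒢.mono h))
      (MeasurableSpace.measurableSpace_iSup_eq _) fun B ⟨t, hB⟩ => ?_
    have hB' := le_iSup (fun t => (𝒢 t : MeasurableSpace Θ)) t B hB
    rw [trim_measurableSet_eq hle hB', trim_measurableSet_eq hle hB',
      withDensity_apply _ (hle B hB'), Measure.restrict_apply (hle B hB')]
    exact setLIntegral_ofReal_le_measure_inter_eq_top_of_measurableSet_filtration hτ hζ hν hζconv hB
  have hA' := Measure.le_iff.1 hρ A hA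
  rwa [trim_measurableSet_eq hle hA, trim_measurableSet_eq hle hA,
    withDensity_apply _ (hle A hA), Measure.restrict_apply (hle A hA)] at hA'

end KunitaYoeurp

theorem statement11_general {Θ : Type*} {m0 : MeasurableSpace Θ} (μ ν : Measure Θ)
    [IsProbabilityMeasure μ] [IsProbabilityMeasure ν]
    (𝒢 : Filtration ℝ≥0 m0)
    (τ : Θ → ℝ≥0∞) (hτ : ∀ t : ℝ≥0, MeasurableSet[𝒢 t] {θ | τ θ ≤ (t : ℝ≥0∞)})
    (ζ : ℝ≥0 → Θ → ℝ)
    (hζmeas : ∀ t, Measurable[𝒢 t] (ζ t))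
    (hν : ∀ t : ℝ≥0, ∀ A : Set Θ, MeasurableSet[𝒢 t] A →
      ν (A ∩ {θ | (t : ℝ≥0∞) < τ θ}) = ∫⁻ θ in A, ENNReal.ofReal (ζ t θ) ∂μ)
    (ζinf : Θ → ℝ)
    (hζconv : ∀ᵐ θ ∂μ, Tendsto (fun t => ζ t θ) atTop (𝓝 (ζinf θ)))
    (hζinfpos : μ {θ | 0 < ζinf θ} = 1) :
    μ.trim (iSup_le fun t => 𝒢.le t) ≪ ν.trim (iSup_le fun t => 𝒢.le t) ∧
    ∀ A : Set Θ, MeasurableSet[⨆ t : ℝ≥0, (𝒢 t : MeasurableSpace Θ)] A →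
      ∫⁻ θ in A, ENNReal.ofReal (ζinf θ) ∂μ ≤ ν (A ∩ {θ | τ θ = ⊤}) := by
  have hζ : ∀ t, Measurable (ζ t) := fun t => (hζmeas t).mono (𝒢.le t) le_rfl
  have key := fun A => setLIntegral_ofReal_le_measure_inter_eq_top (A := A)
    (fun t => 𝒢.le t _ (hτ t)) hζ hν hζconv
  refine ⟨Measure.AbsolutelyContinuous.mk fun s hs hνs => ?_, key⟩
  have hle : (⨆ t, (𝒢 t : MeasurableSpace Θ)) ≤ m0 := iSup_le 𝒢.le
  rw [trim_measurableSet_eq hle hs] at hνs ⊢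
  have hζinf : AEMeasurable ζinf μ := aemeasurable_of_tendsto_metrizable_ae'
    (fun n => (hζ n).aemeasurable) (hζconv.mono fun _ h => h.comp tendsto_natCast_atTop_atTop)
  have hpos : ∀ᵐ θ ∂μ, 0 < ζinf θ :=
    (ae_iff_measure_eq (nullMeasurableSet_lt aemeasurable_const hζinf)).2 (by simp [hζinfpos])
  refine measure_eq_zero_of_setLIntegral_eq_zero hζinf.ennreal_ofReal
    (hpos.mono fun _ h => ENNReal.ofReal_pos.2 h |>.ne') (nonpos_iff_eq_zero.1 ?_)
  exact (key s hs).trans (measure_mono_null inter_subset_left hνs).le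

/-- Let `μ, ν` be probability measures on a filtered measurable space,
`τ` a stopping time and `(ζ_t)` an adapted nonnegative process with `μ(τ = ∞) = 1`,
`ν(A ∩ {τ > t}) = ∫_A ζ_t dμ` for `A ∈ 𝒢_t`, and `ζ_t → ζ_∞` μ-a.s. with `μ(ζ_∞ > 0) = 1`.
Then `μ|𝒢_∞ ≪ ν|𝒢_∞`; in fact `ν(A ∩ {τ = ∞}) ≥ ∫_A ζ_∞ dμ` for every `A ∈ 𝒢_∞`. -/
theorem statement11 {Θ : Type*} {m0 : MeasurableSpace Θ} (μ ν : Measure Θ)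
    [IsProbabilityMeasure μ] [IsProbabilityMeasure ν]
    (𝒢 : Filtration ℝ≥0 m0)
    (τ : Θ → ℝ≥0∞) (hτ : ∀ t : ℝ≥0, MeasurableSet[𝒢 t] {θ | τ θ ≤ (t : ℝ≥0∞)})
    (ζ : ℝ≥0 → Θ → ℝ)
    (hζmeas : ∀ t, Measurable[𝒢 t] (ζ t)) (hζnonneg : ∀ t θ, 0 ≤ ζ t θ)
    (hτμ : μ {θ | τ θ = ⊤} = 1)
    (hν : ∀ t : ℝ≥0, ∀ A : Set Θ, MeasurableSet[𝒢 t] A →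
      ν (A ∩ {θ | (t : ℝ≥0∞) < τ θ}) = ∫⁻ θ in A, ENNReal.ofReal (ζ t θ) ∂μ)
    (ζinf : Θ → ℝ)
    (hζconv : ∀ᵐ θ ∂μ, Tendsto (fun t => ζ t θ) atTop (𝓝 (ζinf θ)))
    (hζinfpos : μ {θ | 0 < ζinf θ} = 1) :
    μ.trim (iSup_le fun t => 𝒢.le t) ≪ ν.trim (iSup_le fun t => 𝒢.le t) ∧
    ∀ A : Set Θ, MeasurableSet[⨆ t : ℝ≥0, (𝒢 t : MeasurableSpace Θ)] A →
      ∫⁻ θ in A, ENNReal.ofReal (ζinf θ) ∂μ ≤ ν (A ∩ {θ | τ θ = ⊤}) :=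
  statement11_general μ ν 𝒢 τ hτ ζ hζmeas hν ζinf hζconv hζinfpos
end

section
/- Let (Ω, F, (F_t)_{t≥0}) be a filtered measurable space with right-continuous filtration carrying two probability measures P and Q with P ≪ Q. Let γ be a right-continuous version of the density process γ_t = dP/dQ|_{F_t}, let T = inf{ t ≥ 0 : γ_t = 0 }, and define Z_t = 1_{{t < T}}/γ_t (with the convention 1_{{t<T}}/γ_t = 0 when γ_t = 0; note that P-almost surely γ_t > 0 for all t). Then for every nonnegative Q-supermartingale X, the process (Z_t X_t)_{t≥0} is a P-supermartingale; that is, for all s, t ≥ 0 and all A ∈ F_t, E_P[1_A Z_{t+s} X_{t+s}] ≤ E_P[1_A Z_t X_t]. -/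
open MeasureTheory Filter Set
open scoped ENNReal NNReal Topology

/-!
On `ℱ u` we have `dP = γ u dQ`, so `E_P[1_A γ_u⁻¹ X_u] = E_Q[1_{A ∩ {γ_u > 0}} X_u]`. A zero of a
density process is absorbing, so `{γ_u > 0}` shrinks `Q`-a.s. as `u` grows, and the
`Q`-supermartingale inequality for `X` on `A ∩ {γ_t > 0} ∈ ℱ t` becomes the `P`-supermartingale
inequality for `γ⁻¹ X`. Finally `Z = γ⁻¹` `P`-a.s.: by right continuity, if `γ` vanishes somewhere
then it drops below `ε` at some time of a countable dense set, an event of `P`-measure at most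
`ε · Q(Ω)`.
-/

namespace MeasureTheory

structure IsDensityProcess {Ω ι : Type*} {m : MeasurableSpace Ω} [Preorder ι]
    (P Q : Measure Ω) (ℱ : Filtration ι m) (γ : ι → Ω → ℝ) : Prop where
  measurable : ∀ t, Measurable[ℱ t] (γ t)
  nonneg : ∀ t ω, 0 ≤ γ t ω
  measure_eq : ∀ t A, MeasurableSet[ℱ t] A → P A = ∫⁻ ω in A, ENNReal.ofReal (γ t ω) ∂Q

namespace IsDensityProcess

section Preorder

variable {Ω ι : Type*} {m : MeasurableSpace Ω} [Preorder ι] {P Q : Measure Ω}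
  {ℱ : Filtration ι m} {γ : ι → Ω → ℝ}

theorem trim_eq_withDensity (hγ : IsDensityProcess P Q ℱ γ) (t : ι) :
    P.trim (ℱ.le t) = (Q.trim (ℱ.le t)).withDensity fun ω => ENNReal.ofReal (γ t ω) := by
  refine @Measure.ext _ (ℱ t) _ _ fun A hA => ?_
  rw [trim_measurableSet_eq _ hA, hγ.measure_eq t A hA, withDensity_apply _ hA,
    restrict_trim _ Q hA, lintegral_trim _ (hγ.measurable t).ennreal_ofReal]

theorem lintegral_eq (hγ : IsDensityProcess P Q ℱ γ) {t : ι} {f : Ω → ℝ≥0∞}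
    (hf : Measurable[ℱ t] f) :
    ∫⁻ ω, f ω ∂P = ∫⁻ ω, ENNReal.ofReal (γ t ω) * f ω ∂Q := by
  have hγt := (hγ.measurable t).ennreal_ofReal
  rw [← lintegral_trim (ℱ.le t) hf, hγ.trim_eq_withDensity,
    lintegral_withDensity_eq_lintegral_mul _ hγt hf, lintegral_trim _ (hγt.mul hf)]
  rfl

theorem setLIntegral_inv_mul_eq (hγ : IsDensityProcess P Q ℱ γ) {t : ι} {X : Ω → ℝ}
    (hX : Measurable[ℱ t] X) {A : Set Ω} (hA : MeasurableSet[ℱ t] A) :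
    ∫⁻ ω in A, ENNReal.ofReal ((γ t ω)⁻¹ * X ω) ∂P =
      ∫⁻ ω in {ω | 0 < γ t ω} ∩ A, ENNReal.ofReal (X ω) ∂Q := by
  have hpos : MeasurableSet[ℱ t] {ω | 0 < γ t ω} := hγ.measurable t measurableSet_Ioi
  have hf : Measurable[ℱ t] fun ω => ENNReal.ofReal ((γ t ω)⁻¹ * X ω) :=
    ((hγ.measurable t).inv.mul hX).ennreal_ofReal
  rw [← lintegral_indicator (ℱ.le t _ hA), ← lintegral_indicator (ℱ.le t _ (hpos.inter hA)),
    hγ.lintegral_eq (hf.indicator hA)]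
  refine lintegral_congr fun ω => ?_
  by_cases hω : ω ∈ A
  · rcases (hγ.nonneg t ω).lt_or_eq with h | h
    · have hω' : ω ∈ {ω | 0 < γ t ω} ∩ A := ⟨h, hω⟩
      simp only [indicator_of_mem hω, indicator_of_mem hω', ← ENNReal.ofReal_mul h.le,
        mul_inv_cancel_left₀ h.ne']
    · simp [← h]
  · simp [hω]

theorem setOf_pos_ae_le_of_le (hγ : IsDensityProcess P Q ℱ γ) {s t : ι} (hst : s ≤ t) :
    {ω | 0 < γ t ω} ≤ᵐ[Q] {ω | 0 < γ s ω} := by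
  set A := {ω | γ s ω = 0}
  have hA : MeasurableSet[ℱ s] A := hγ.measurable s (measurableSet_singleton 0)
  have hPA : P A = 0 := by
    rw [hγ.measure_eq s A hA, setLIntegral_eq_zero_iff (ℱ.le s _ hA)
      ((hγ.measurable s).mono (ℱ.le s) le_rfl).ennreal_ofReal]
    exact ae_of_all _ fun ω hω => by simp [show γ s ω = 0 from hω]
  rw [hγ.measure_eq t A (ℱ.mono hst _ hA), setLIntegral_eq_zero_iff (ℱ.le s _ hA)
    ((hγ.measurable t).mono (ℱ.le t) le_rfl).ennreal_ofReal] at hPA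
  filter_upwards [hPA] with ω hω hpos
  by_contra hs
  have h0 : γ s ω = 0 := (not_lt.1 hs).antisymm (hγ.nonneg s ω)
  exact hpos.not_ge (by simpa using hω h0)

end Preorder

section LinearOrder

variable {Ω ι κ : Type*} {m : MeasurableSpace Ω} [LinearOrder ι] {P Q : Measure Ω}
  {ℱ : Filtration ι m} {γ : ι → Ω → ℝ}

theorem measure_biUnion_finset_lt_le (hγ : IsDensityProcess P Q ℱ γ) (d : κ → ι) (ε : ℝ)
    (F : Finset κ) :
    P (⋃ k ∈ F, {ω | γ (d k) ω < ε}) ≤ ENNReal.ofReal ε * Q (⋃ k ∈ F, {ω | γ (d k) ω < ε}) := by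
  classical
  set S : κ → Set Ω := fun k => {ω | γ (d k) ω < ε}
  have hS : ∀ k, MeasurableSet[ℱ (d k)] (S k) := fun k => hγ.measurable (d k) measurableSet_Iio
  induction F using Finset.induction_on_max_value d with
  | empty => simp
  | insert a F _ hmax ih =>
    -- Split off the points where `γ` drops below `ε` at the latest time `d a` only: this piece
    -- is `ℱ (d a)`-measurable, and on it `dP = γ (d a) dQ ≤ ε dQ`.
    set B := S a \ ⋃ k ∈ F, S k
    have hB : MeasurableSet[ℱ (d a)] B := (hS a).diff <|
      .biUnion F.countable_toSet fun k hk => ℱ.mono (hmax k hk) _ (hS k)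
    have hunion : ⋃ k ∈ insert a F, S k = (⋃ k ∈ F, S k) ∪ B := by
      rw [union_sdiff_self, Finset.set_biUnion_insert, union_comm]
    have hPB : P B ≤ ENNReal.ofReal ε * Q B := by
      calc P B = ∫⁻ ω in B, ENNReal.ofReal (γ (d a) ω) ∂Q := hγ.measure_eq _ B hB
        _ ≤ ∫⁻ _ in B, ENNReal.ofReal ε ∂Q :=
          setLIntegral_mono measurable_const fun ω hω => ENNReal.ofReal_le_ofReal hω.1.le
        _ = ENNReal.ofReal ε * Q B := by rw [setLIntegral_const, mul_comm]
    calc P (⋃ k ∈ insert a F, S k) ≤ P (⋃ k ∈ F, S k) + P B := by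
          rw [hunion]; exact measure_union_le _ _
      _ ≤ ENNReal.ofReal ε * Q (⋃ k ∈ F, S k) + ENNReal.ofReal ε * Q B := add_le_add ih hPB
      _ = ENNReal.ofReal ε * Q (⋃ k ∈ insert a F, S k) := by
          rw [← mul_add, hunion, measure_union disjoint_sdiff_right (ℱ.le _ _ hB)]

theorem measure_iUnion_lt_le [Countable κ] (hγ : IsDensityProcess P Q ℱ γ) (d : κ → ι)
    (ε : ℝ) :
    P (⋃ k, {ω | γ (d k) ω < ε}) ≤ ENNReal.ofReal ε * Q (⋃ k, {ω | γ (d k) ω < ε}) := by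
  set S : κ → Set Ω := fun k => {ω | γ (d k) ω < ε}
  have hmono : Monotone fun F : Finset κ => ⋃ k ∈ F, S k :=
    fun _ _ h => biUnion_subset_biUnion_left h
  rw [iUnion_eq_iUnion_finset, hmono.directed_le.measure_iUnion]
  refine iSup_le fun F => (hγ.measure_biUnion_finset_lt_le d ε F).trans ?_
  gcongr
  exact subset_iUnion (fun F : Finset κ => ⋃ k ∈ F, S k) F

theorem measure_exists_eq_zero [TopologicalSpace ι] [OrderTopology ι] [DenselyOrdered ι]
    [NoMaxOrder ι] [TopologicalSpace.SeparableSpace ι] [IsFiniteMeasure Q]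
    (hγ : IsDensityProcess P Q ℱ γ)
    (hγrc : ∀ ω t, ContinuousWithinAt (fun s => γ s ω) (Ici t) t) :
    P {ω | ∃ t, γ t ω = 0} = 0 := by
  obtain ⟨D, hDc, hD⟩ := TopologicalSpace.exists_countable_dense ι
  have := hDc.to_subtype
  have hsub : ∀ ε > 0, {ω | ∃ t, γ t ω = 0} ⊆ ⋃ q : D, {ω | γ q ω < ε} := by
    rintro ε hε ω ⟨t, ht⟩
    have hnear : ∀ᶠ s in 𝓝[≥] t, γ s ω < ε :=
      (hγrc ω t).eventually (gt_mem_nhds (show γ t ω < ε from ht ▸ hε))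
    obtain ⟨b, htb, hIco⟩ := mem_nhdsGE_iff_exists_Ico_subset.1 hnear
    obtain ⟨q, hqD, hq⟩ := hD.exists_between htb
    exact mem_iUnion.2 ⟨⟨q, hqD⟩, hIco ⟨hq.1.le, hq.2⟩⟩
  have hbound : ∀ ε > 0, P {ω | ∃ t, γ t ω = 0} ≤ ENNReal.ofReal ε * Q univ := fun ε hε =>
    calc P {ω | ∃ t, γ t ω = 0} ≤ P (⋃ q : D, {ω | γ q ω < ε}) := measure_mono (hsub ε hε)
      _ ≤ ENNReal.ofReal ε * Q (⋃ q : D, {ω | γ q ω < ε}) := hγ.measure_iUnion_lt_le _ ε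
      _ ≤ ENNReal.ofReal ε * Q univ := by gcongr; exact subset_univ _
  have hlim : Tendsto (fun ε => ENNReal.ofReal ε * Q univ) (𝓝[>] 0) (𝓝 0) := by
    have h := ENNReal.Tendsto.mul_const (ENNReal.tendsto_ofReal
      (tendsto_nhdsWithin_of_tendsto_nhds (tendsto_id (x := 𝓝 (0 : ℝ))) (s := Ioi 0)))
      (Or.inr (measure_ne_top Q univ))
    simpa using h
  exact nonpos_iff_eq_zero.1
    (ge_of_tendsto hlim (eventually_nhdsWithin_of_forall fun ε hε => hbound ε hε))

end LinearOrder

end IsDensityProcess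

theorem Supermartingale.setLIntegral_ofReal_le {Ω ι : Type*} {m : MeasurableSpace Ω}
    [Preorder ι] {μ : Measure Ω} {ℱ : Filtration ι m} [SigmaFiniteFiltration μ ℱ]
    {X : ι → Ω → ℝ} (hX : Supermartingale X ℱ μ) (hX₀ : ∀ t ω, 0 ≤ X t ω) {i j : ι}
    (hij : i ≤ j) {A : Set Ω} (hA : MeasurableSet[ℱ i] A) :
    ∫⁻ ω in A, ENNReal.ofReal (X j ω) ∂μ ≤ ∫⁻ ω in A, ENNReal.ofReal (X i ω) ∂μ := by
  simp only [← ofReal_integral_eq_lintegral_ofReal (hX.integrable _).integrableOn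
    (ae_of_all _ (hX₀ _))]
  exact ENNReal.ofReal_le_ofReal (hX.setIntegral_le hij hA)

end MeasureTheory

theorem statement13_general {Ω : Type*} {m : MeasurableSpace Ω} (P Q : Measure Ω)
    [IsProbabilityMeasure Q]
    (ℱ : Filtration ℝ≥0 m)
    (γ : ℝ≥0 → Ω → ℝ)
    (hγmeas : ∀ t, Measurable[ℱ t] (γ t))
    (hγnonneg : ∀ t ω, 0 ≤ γ t ω)
    (hγdens : ∀ t : ℝ≥0, ∀ A : Set Ω, MeasurableSet[ℱ t] A →
      P A = ∫⁻ ω in A, ENNReal.ofReal (γ t ω) ∂Q)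
    (hγrc : ∀ ω t, ContinuousWithinAt (fun s => γ s ω) (Ici t) t)
    (T : Ω → ℝ≥0∞)
    (hT : ∀ ω, T ω = ⨅ (t : ℝ≥0) (_ : γ t ω = 0), (t : ℝ≥0∞))
    (Z : ℝ≥0 → Ω → ℝ)
    (hZ : ∀ t ω, Z t ω = if (t : ℝ≥0∞) < T ω then (γ t ω)⁻¹ else 0)
    (X : ℝ≥0 → Ω → ℝ) (hX : Supermartingale X ℱ Q) (hXnonneg : ∀ t ω, 0 ≤ X t ω) :
    ∀ s t : ℝ≥0, ∀ A : Set Ω, MeasurableSet[ℱ t] A →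
      ∫⁻ ω in A, ENNReal.ofReal (Z (t + s) ω * X (t + s) ω) ∂P ≤
        ∫⁻ ω in A, ENNReal.ofReal (Z t ω * X t ω) ∂P := by
  intro s t A hA
  have hγ : IsDensityProcess P Q ℱ γ := ⟨hγmeas, hγnonneg, hγdens⟩
  have hXm : ∀ u, Measurable[ℱ u] (X u) := fun u => (hX.stronglyAdapted u).measurable
  have hZX_le : ∀ u ω, Z u ω * X u ω ≤ (γ u ω)⁻¹ * X u ω := fun u ω => by
    rw [hZ]
    split_ifs
    · rfl
    · rw [zero_mul]
      exact mul_nonneg (inv_nonneg.2 (hγnonneg u ω)) (hXnonneg u ω)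
  have hZ_ae : Z t =ᵐ[P] fun ω => (γ t ω)⁻¹ := by
    filter_upwards [measure_eq_zero_iff_ae_notMem.1 (hγ.measure_exists_eq_zero hγrc)]
      with ω hω
    simp [hZ, hT, not_exists.1 hω]
  calc ∫⁻ ω in A, ENNReal.ofReal (Z (t + s) ω * X (t + s) ω) ∂P
      ≤ ∫⁻ ω in A, ENNReal.ofReal ((γ (t + s) ω)⁻¹ * X (t + s) ω) ∂P :=
        lintegral_mono fun ω => ENNReal.ofReal_le_ofReal (hZX_le _ ω)
    _ = ∫⁻ ω in {ω | 0 < γ (t + s) ω} ∩ A, ENNReal.ofReal (X (t + s) ω) ∂Q :=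
        hγ.setLIntegral_inv_mul_eq (hXm _) (ℱ.mono le_self_add _ hA)
    _ ≤ ∫⁻ ω in {ω | 0 < γ t ω} ∩ A, ENNReal.ofReal (X (t + s) ω) ∂Q :=
        lintegral_mono_set' ((hγ.setOf_pos_ae_le_of_le le_self_add).inter EventuallyLE.rfl)
    _ ≤ ∫⁻ ω in {ω | 0 < γ t ω} ∩ A, ENNReal.ofReal (X t ω) ∂Q :=
        hX.setLIntegral_ofReal_le hXnonneg le_self_add ((hγmeas t measurableSet_Ioi).inter hA)
    _ = ∫⁻ ω in A, ENNReal.ofReal ((γ t ω)⁻¹ * X t ω) ∂P :=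
        (hγ.setLIntegral_inv_mul_eq (hXm t) hA).symm
    _ = ∫⁻ ω in A, ENNReal.ofReal (Z t ω * X t ω) ∂P := by
        refine lintegral_congr_ae (ae_restrict_of_ae ?_)
        filter_upwards [hZ_ae] with ω hω
        rw [hω]

/-- Let `P ≪ Q` on a filtered measurable space with right-continuous
filtration, let `γ` be a right-continuous version of the density process
`γ_t = dP/dQ|_{F_t}`, let `T = inf{t : γ_t = 0}` and `Z_t = 1_{t < T}/γ_t`. Then for every
nonnegative `Q`-supermartingale `X`, the process `ZX` is a `P`-supermartingale:
`E_P[1_A Z_{t+s} X_{t+s}] ≤ E_P[1_A Z_t X_t]` for all `s, t ≥ 0` and `A ∈ F_t`. -/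
theorem statement13 {Ω : Type*} {m : MeasurableSpace Ω} (P Q : Measure Ω)
    [IsProbabilityMeasure P] [IsProbabilityMeasure Q] (hPQ : P ≪ Q)
    (ℱ : Filtration ℝ≥0 m)
    (hright : ∀ t : ℝ≥0, ℱ t = ⨅ (s : ℝ≥0) (_ : t < s), ℱ s)
    (γ : ℝ≥0 → Ω → ℝ)
    (hγmeas : ∀ t, Measurable[ℱ t] (γ t))
    (hγnonneg : ∀ t ω, 0 ≤ γ t ω)
    (hγdens : ∀ t : ℝ≥0, ∀ A : Set Ω, MeasurableSet[ℱ t] A →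
      P A = ∫⁻ ω in A, ENNReal.ofReal (γ t ω) ∂Q)
    (hγrc : ∀ ω t, ContinuousWithinAt (fun s => γ s ω) (Ici t) t)
    (T : Ω → ℝ≥0∞)
    (hT : ∀ ω, T ω = ⨅ (t : ℝ≥0) (_ : γ t ω = 0), (t : ℝ≥0∞))
    (Z : ℝ≥0 → Ω → ℝ)
    (hZ : ∀ t ω, Z t ω = if (t : ℝ≥0∞) < T ω then (γ t ω)⁻¹ else 0)
    (X : ℝ≥0 → Ω → ℝ) (hX : Supermartingale X ℱ Q) (hXnonneg : ∀ t ω, 0 ≤ X t ω) :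
    ∀ s t : ℝ≥0, ∀ A : Set Ω, MeasurableSet[ℱ t] A →
      ∫⁻ ω in A, ENNReal.ofReal (Z (t + s) ω * X (t + s) ω) ∂P ≤
        ∫⁻ ω in A, ENNReal.ofReal (Z t ω * X t ω) ∂P :=
  statement13_general P Q ℱ γ hγmeas hγnonneg hγdens hγrc T hT Z hZ X hX hXnonneg
end

section
/- For each n ∈ ℕ, let X_n be a metrizable topological vector space over ℝ and let C_n ⊆ X_n be a convexly compact subset. Then the product ∏_{n ∈ ℕ} C_n is convexly compact in ∏_{n ∈ ℕ} X_n equipped with the product topology. -/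
/-!
Let `𝒜` be a family of closed convex subsets of `∏ Cₙ` with the finite intersection property and
let `T` run over the (directed) family of its finite intersections. A common point `a` of the
closures of all `T` is built one coordinate at a time: once `(a₀, …, aₙ₋₁)` lies in the closure of
the projection of every `T`, the admissible values of `aₙ` form a directed family of closed convex
subsets of `Cₙ`, which has a common point by convex compactness.

Metrizability is needed to see that each admissible set is nonempty: choose points of `T` whose
first `n` coordinates converge to `(a₀, …, aₙ₋₁)` so fast (along balanced neighbourhoods with
`Bₖ₊₁ + Bₖ₊₁ ⊆ Bₖ`) that the convex hulls of the tails still converge, and take for `aₙ` a common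
point of the closed convex hulls of the tails of their `n`-th coordinates.
-/

open Set

def ConvexlyCompact {X : Type*} [AddCommGroup X] [Module ℝ X] [TopologicalSpace X]
    (C : Set X) : Prop :=
  IsClosed C ∧ Convex ℝ C ∧
    ∀ 𝒜 : Set (Set X), (∀ F ∈ 𝒜, IsClosed F ∧ Convex ℝ F ∧ F ⊆ C) →
      ⋂₀ 𝒜 = ∅ → ∃ s : Finset (Set X), ↑s ⊆ 𝒜 ∧ ⋂₀ (↑s : Set (Set X)) = ∅

open Filter Topology Pointwise

theorem ConvexlyCompact.nonempty_iInter_of_directed {X : Type*} [AddCommGroup X] [Module ℝ X]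
    [TopologicalSpace X] {C : Set X} (hC : ConvexlyCompact C) {ι : Type*} [Nonempty ι]
    {F : ι → Set X} (hdir : Directed (· ⊇ ·) F) (hne : ∀ i, (F i).Nonempty)
    (hcl : ∀ i, IsClosed (F i)) (hcv : ∀ i, Convex ℝ (F i)) (hFC : ∀ i, F i ⊆ C) :
    (⋂ i, F i).Nonempty := by
  classical
  by_contra h
  obtain ⟨s, hsF, hs⟩ := hC.2.2 (range F) (forall_mem_range.2 fun i => ⟨hcl i, hcv i, hFC i⟩)
    (by rwa [sInter_range, ← not_nonempty_iff_eq_empty])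
  rw [← image_univ] at hsF
  obtain ⟨t, -, rfl⟩ := Finset.subset_set_image_iff.1 hsF
  obtain ⟨z, hz⟩ := hdir.finset_le t
  obtain ⟨x, hx⟩ := hne z
  rw [Finset.coe_image, sInter_image, ← not_nonempty_iff_eq_empty] at hs
  exact hs ⟨x, mem_iInter₂.2 fun i hi => hz i hi hx⟩

section Chain

variable {E : Type*} [AddCommGroup E] [Module ℝ E]

theorem sum_smul_mem_of_add_subset {B : ℕ → Set E} (hbal : ∀ n, Balanced ℝ (B n))
    (hadd : ∀ n, B (n + 1) + B (n + 1) ⊆ B n) {b : ℕ → E} (hb : ∀ n, b n ∈ B n)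
    {ι : Type*} (t : Finset ι) {w : ι → ℝ} {κ : ι → ℕ} {j : ℕ} (hw₀ : ∀ i ∈ t, 0 ≤ w i)
    (hw₁ : ∑ i ∈ t, w i ≤ 1) (hκ : ∀ i ∈ t, j < κ i) : ∑ i ∈ t, w i • b (κ i) ∈ B j := by
  classical
  suffices ∀ d j (t : Finset ι), (∀ i ∈ t, 0 ≤ w i) → ∑ i ∈ t, w i ≤ 1 →
      (∀ i ∈ t, j < κ i ∧ κ i ≤ j + d) → ∑ i ∈ t, w i • b (κ i) ∈ B j from
    this (t.sup κ) j t hw₀ hw₁ fun i hi => ⟨hκ i hi, (t.le_sup hi).trans (by omega)⟩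
  intro d
  induction d with
  | zero =>
    intro j t _ _ hκ
    rw [Finset.sum_eq_zero fun i hi => absurd (hκ i hi) (by omega)]
    exact (hbal j).zero_mem ⟨b j, hb j⟩
  | succ d ih =>
    intro j t hw₀ hw₁ hκ
    have hw₁' : ∀ p : ι → Prop, [DecidablePred p] → ∑ i ∈ t.filter p, w i ≤ 1 := fun p _ =>
      (Finset.sum_le_sum_of_subset_of_nonneg (Finset.filter_subset _ _)
        fun i hi _ => hw₀ i hi).trans hw₁
    rw [← Finset.sum_filter_add_sum_filter_not t (fun i => κ i = j + 1)]
    refine hadd j (add_mem_add ?_ ?_)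
    · rw [Finset.sum_congr rfl fun i hi => by rw [(Finset.mem_filter.1 hi).2],
        ← Finset.sum_smul]
      refine (hbal (j + 1)).smul_mem ?_ (hb (j + 1))
      rw [Real.norm_of_nonneg
        (Finset.sum_nonneg fun i hi => hw₀ i (Finset.mem_of_mem_filter i hi))]
      exact hw₁' _
    · refine ih (j + 1) _ (fun i hi => hw₀ i (Finset.mem_of_mem_filter i hi)) (hw₁' _) ?_
      intro i hi
      obtain ⟨hit, hne⟩ := Finset.mem_filter.1 hi
      have := hκ i hit
      omega

theorem convexHull_image_Ioi_subset_of_add_subset {B : ℕ → Set E}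
    (hbal : ∀ n, Balanced ℝ (B n)) (hadd : ∀ n, B (n + 1) + B (n + 1) ⊆ B n) {b : ℕ → E}
    (hb : ∀ n, b n ∈ B n) (j : ℕ) : convexHull ℝ (b '' Ioi j) ⊆ B j := by
  rw [convexHull_eq]
  rintro - ⟨ι, t, w, z, hw₀, hw₁, hz, rfl⟩
  choose! κ hκ hκz using hz
  rw [Finset.centerMass_eq_of_sum_1 _ _ hw₁,
    Finset.sum_congr rfl fun i hi => by rw [← hκz i hi]]
  exact sum_smul_mem_of_add_subset hbal hadd hb t hw₀ hw₁.le hκ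

end Chain

section TopologicalVectorSpace

variable {E : Type*} [AddCommGroup E] [Module ℝ E] [TopologicalSpace E]
  [IsTopologicalAddGroup E] [ContinuousSMul ℝ E] [FirstCountableTopology E]

variable (E) in
theorem exists_antitone_basis_balanced_add_subset :
    ∃ B : ℕ → Set E, (𝓝 (0 : E)).HasAntitoneBasis B ∧
      ∀ n, Balanced ℝ (B n) ∧ B (n + 1) + B (n + 1) ⊆ B n := by
  obtain ⟨u, hu, hadd⟩ := IsTopologicalAddGroup.exists_antitone_basis_nhds_zero E
  refine ⟨fun n => balancedCore ℝ (u n), ⟨hu.toHasBasis.to_hasBasis' ?_ ?_, ?_⟩, fun n =>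
    ⟨balancedCore_balanced _, ?_⟩⟩
  · exact fun n _ => ⟨n, trivial, balancedCore_subset _⟩
  · exact fun n _ => balancedCore_mem_nhds_zero (hu.mem n)
  · exact fun m n hmn => (balancedCore_balanced _).subset_balancedCore_of_subset
      ((balancedCore_subset _).trans (hu.antitone hmn))
  · exact ((balancedCore_balanced _).add (balancedCore_balanced _)).subset_balancedCore_of_subset
      ((add_subset_add (balancedCore_subset _) (balancedCore_subset _)).trans (hadd n))

/-- In a space that need not be locally convex, convex hulls of tails of a sequence converging
to `v` need not shrink to `v`; a sufficiently fast sequence does the job. -/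
theorem exists_seq_tendsto_smallSets_convexHull {A : Set E} {v : E} (hv : v ∈ closure A) :
    ∃ x : ℕ → E, (∀ k, x k ∈ A) ∧
      Tendsto (fun j => convexHull ℝ (x '' Ioi j)) atTop (𝓝 v).smallSets := by
  obtain ⟨B, hB, hBchain⟩ := exists_antitone_basis_balanced_add_subset E
  choose hBbal hBadd using hBchain
  have hnear : ∀ k, ∃ x ∈ A, x - v ∈ B k := fun k =>
    (mem_closure_iff_nhds.1 hv _ (tendsto_sub_nhds_zero_iff.2 tendsto_id (hB.mem k))).imp
      fun x hx => ⟨hx.2, hx.1⟩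
  choose x hxA hxB using hnear
  have hhull : ∀ j, ∀ y ∈ convexHull ℝ (x '' Ioi j), y - v ∈ B j := by
    intro j y hy
    have h : -v +ᵥ y ∈ convexHull ℝ (-v +ᵥ x '' Ioi j) := by
      rw [convexHull_vadd]
      exact vadd_mem_vadd_set hy
    simp only [← image_vadd, image_image, vadd_eq_add, neg_add_eq_sub] at h
    exact convexHull_image_Ioi_subset_of_add_subset hBbal hBadd hxB j h
  refine ⟨x, hxA, tendsto_smallSets_iff.2 fun U hU => ?_⟩
  have hU0 : (v + ·) ⁻¹' U ∈ 𝓝 0 := (continuous_const_add v).tendsto' 0 v (add_zero v) hU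
  filter_upwards [tendsto_smallSets_iff.1 hB.tendsto_smallSets _ hU0] with j hj y hy
  simpa using hj (hhull j y hy)

end TopologicalVectorSpace

section Fiber

variable {E F : Type*} [AddCommGroup E] [Module ℝ E] [TopologicalSpace E]
  [IsTopologicalAddGroup E] [ContinuousSMul ℝ E] [FirstCountableTopology E]
  [AddCommGroup F] [Module ℝ F] [TopologicalSpace F] [IsTopologicalAddGroup F]
  [ContinuousSMul ℝ F] {K : Set F}

theorem ConvexlyCompact.exists_mk_mem_closure (hK : ConvexlyCompact K) {S : Set (E × F)}
    (hS : Convex ℝ S) (hSK : ∀ p ∈ S, p.2 ∈ K) {v : E} (hv : v ∈ closure (Prod.fst '' S)) :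
    ∃ c, (v, c) ∈ closure S := by
  obtain ⟨x, hxS, hx⟩ := exists_seq_tendsto_smallSets_convexHull hv
  choose p hpS hpx using hxS
  set D : ℕ → Set (E × F) := fun j => convexHull ℝ (p '' Ioi j)
  have hDS : ∀ j, D j ⊆ S := fun j =>
    hS.convexHull_subset_iff.2 (image_subset_iff.2 fun k _ => hpS k)
  have hDfst : ∀ j, Prod.fst '' D j = convexHull ℝ (x '' Ioi j) := fun j => by
    have h := (LinearMap.fst ℝ E F).image_convexHull (p '' Ioi j)
    simpa only [LinearMap.coe_fst, image_image, hpx] using h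
  obtain ⟨c, hc⟩ := hK.nonempty_iInter_of_directed (F := fun j => closure (Prod.snd '' D j))
    (Antitone.directed_ge fun i j hij => closure_mono (image_mono
      (convexHull_mono (image_mono (Ioi_subset_Ioi hij)))))
    (fun j => ⟨_, subset_closure (mem_image_of_mem _ (subset_convexHull ℝ _
      (mem_image_of_mem p (lt_add_one j))))⟩)
    (fun j => isClosed_closure)
    (fun j => ((convex_convexHull ℝ _).linear_image (LinearMap.snd ℝ E F)).closure)
    (fun j => closure_minimal (fun _ ⟨q, hq, hqc⟩ => hqc ▸ hSK q (hDS j hq)) hK.1)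
  refine ⟨c, mem_closure_iff_nhds.2 fun N hN => ?_⟩
  rw [nhds_prod_eq, mem_prod_iff] at hN
  obtain ⟨U, hU, W, hW, hUW⟩ := hN
  obtain ⟨j, hj⟩ := (tendsto_smallSets_iff.1 hx U hU).exists
  obtain ⟨-, hqW, q, hqD, rfl⟩ := mem_closure_iff_nhds.1 (mem_iInter.1 hc j) W hW
  exact ⟨q, hUW ⟨hj (hDfst j ▸ mem_image_of_mem _ hqD), hqW⟩, hDS j hqD⟩

theorem ConvexlyCompact.exists_forall_mk_mem_closure (hK : ConvexlyCompact K) {ι : Type*}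
    [Nonempty ι] {S : ι → Set (E × F)} (hdir : Directed (· ⊇ ·) S) (hS : ∀ i, Convex ℝ (S i))
    (hSK : ∀ i, ∀ p ∈ S i, p.2 ∈ K) {v : E} (hv : ∀ i, v ∈ closure (Prod.fst '' S i)) :
    ∃ c, ∀ i, (v, c) ∈ closure (S i) := by
  have hslice : ∀ i, Convex ℝ (Prod.mk v ⁻¹' closure (S i)) := fun i x hx y hy a b ha hb hab => by
    simpa [Convex.combo_self hab] using (hS i).closure hx hy ha hb hab
  obtain ⟨c, hc⟩ := hK.nonempty_iInter_of_directed (F := fun i => Prod.mk v ⁻¹' closure (S i))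
    (hdir.mono_comp (g := fun T => Prod.mk v ⁻¹' closure T) _
      fun _ _ h => preimage_mono (closure_mono h))
    (fun i => hK.exists_mk_mem_closure (hS i) (hSK i) (hv i))
    (fun i => isClosed_closure.preimage (Continuous.prodMk_right v)) hslice
    (fun i c hc => closure_minimal (fun p hp => hSK i p hp) (hK.1.preimage continuous_snd) hc)
  exact ⟨c, fun i => mem_iInter.1 hc i⟩

end Fiber

section Product

variable {X : ℕ → Type*} [∀ n, AddCommGroup (X n)] [∀ n, Module ℝ (X n)]
  [∀ n, TopologicalSpace (X n)]

/-- Closures of images under `truncate n` stand in for closures of projections onto the first `n`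
factors. -/
noncomputable def truncate (n : ℕ) : (∀ i, X i) →L[ℝ] ∀ i, X i :=
  ContinuousLinearMap.pi fun i => if i < n then ContinuousLinearMap.proj i else 0

theorem truncate_apply (n : ℕ) (a : ∀ i, X i) (i : ℕ) :
    truncate n a i = if i < n then a i else 0 := by
  simp only [truncate, ContinuousLinearMap.pi_apply]
  split_ifs <;> rfl

theorem truncate_congr {n : ℕ} {a b : ∀ i, X i} (h : ∀ i < n, a i = b i) :
    truncate n a = truncate n b := by
  ext i
  simp only [truncate_apply]
  split_ifs with hi
  exacts [h i hi, rfl]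

theorem truncate_succ_update (n : ℕ) (a : ∀ i, X i) (c : X n) :
    truncate (n + 1) (Function.update a n c) = truncate n a + Pi.single n c := by
  ext i
  rcases lt_trichotomy i n with h | rfl | h
  · simp [truncate_apply, h, h.ne, Nat.lt_succ_of_lt h]
  · simp [truncate_apply]
  · simp [truncate_apply, h.ne', Nat.lt_succ_iff.not.2 h.not_ge, h.not_gt]

theorem mem_closure_of_forall_truncate_mem_closure {T : Set (∀ i, X i)} {a : ∀ i, X i}
    (h : ∀ n, truncate n a ∈ closure (truncate n '' T)) : a ∈ closure T := by
  refine mem_closure_iff_nhds.2 fun U hU => ?_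
  rw [nhds_pi, Filter.mem_pi'] at hU
  obtain ⟨I, V, hV, hIV⟩ := hU
  obtain ⟨n, hn⟩ := I.exists_nat_subset_range
  have hIn : ∀ b : ∀ i, X i, ∀ i ∈ I, truncate n b i = b i := fun b i hi => by
    rw [truncate_apply, if_pos (Finset.mem_range.1 (hn hi))]
  obtain ⟨-, hy, t, ht, rfl⟩ := mem_closure_iff_nhds.1 (h n) _
    (set_pi_mem_nhds I.finite_toSet fun i hi => (hIn a i hi).symm ▸ hV i)
  exact ⟨t, hIV fun i hi => hIn t i hi ▸ hy i hi, ht⟩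

theorem exists_forall_of_exists_update {Y : ℕ → Type*} (p : ℕ → (∀ i, Y i) → Prop)
    (hp : ∀ n a b, (∀ i < n, a i = b i) → p n a → p n b) {a₀ : ∀ i, Y i} (h₀ : p 0 a₀)
    (hstep : ∀ n a, p n a → ∃ c, p (n + 1) (Function.update a n c)) : ∃ a, ∀ n, p n a := by
  have hstep' : ∀ n a, ∃ c, p n a → p (n + 1) (Function.update a n c) := fun n a => by
    by_cases h : p n a
    exacts [(hstep n a h).imp fun _ hc _ => hc, ⟨a n, fun h' => absurd h' h⟩]
  choose c hc using hstep'
  let seq : ℕ → ∀ i, Y i := fun n => Nat.rec a₀ (fun m am => Function.update am m (c m am)) n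
  have hseq : ∀ n, p n (seq n) := fun n => by
    induction n with
    | zero => exact h₀
    | succ n ih => exact hc n _ ih
  have hagree : ∀ i m, i < m → seq m i = seq (i + 1) i := fun i m => by
    induction m with
    | zero => omega
    | succ m ih =>
      intro him
      rcases Nat.lt_succ_iff_lt_or_eq.1 him with h | rfl
      · exact (Function.update_of_ne (by omega) _ _).trans (ih h)
      · rfl
  exact ⟨fun i => seq (i + 1) i, fun n => hp n _ _ (fun i hi => hagree i n hi) (hseq n)⟩

variable [∀ n, IsTopologicalAddGroup (X n)] [∀ n, ContinuousSMul ℝ (X n)]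
  [∀ n, FirstCountableTopology (X n)]

theorem ConvexlyCompact.exists_truncate_update_mem_closure {n : ℕ} {C : Set (X n)}
    (hC : ConvexlyCompact C) {ι : Type*} [Nonempty ι] {T : ι → Set (∀ i, X i)}
    (hdir : Directed (· ⊇ ·) T) (hT : ∀ i, Convex ℝ (T i)) (hTC : ∀ i, ∀ t ∈ T i, t n ∈ C)
    {a : ∀ i, X i} (ha : ∀ i, truncate n a ∈ closure (truncate n '' T i)) :
    ∃ c, ∀ i, truncate (n + 1) (Function.update a n c) ∈ closure (truncate (n + 1) '' T i) := by
  set L := (truncate n).prod (ContinuousLinearMap.proj (R := ℝ) (φ := X) n)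
  set Φ := (ContinuousLinearMap.id ℝ (∀ i, X i)).coprod (ContinuousLinearMap.single ℝ X n)
  have hL : ∀ t, L t = (truncate n t, t n) := fun _ => rfl
  have hΦ : ∀ b c, Φ (truncate n b, c) = truncate (n + 1) (Function.update b n c) := fun b c => by
    simp [Φ, truncate_succ_update]
  obtain ⟨c, hc⟩ := hC.exists_forall_mk_mem_closure (S := fun i => L '' T i)
    (hdir.mono_comp (g := fun s => L '' s) _ fun _ _ h => image_mono h)
    (fun i => (hT i).linear_image L.toLinearMap)
    (fun i => forall_mem_image.2 fun t ht => hTC i t ht)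
    (fun i => by simpa only [image_image, hL] using ha i)
  refine ⟨c, fun i => ?_⟩
  have hΦL : Φ '' (L '' T i) = truncate (n + 1) '' T i := by
    rw [image_image]
    exact image_congr fun t _ => by rw [hL, hΦ, Function.update_eq_self]
  rw [← hΦ, ← hΦL]
  exact image_closure_subset_closure_image Φ.continuous (mem_image_of_mem _ (hc i))

theorem exists_forall_mem_closure_of_directed {C : ∀ n, Set (X n)}
    (hC : ∀ n, ConvexlyCompact (C n)) {ι : Type*} [Nonempty ι] {T : ι → Set (∀ n, X n)}
    (hdir : Directed (· ⊇ ·) T) (hT : ∀ i, Convex ℝ (T i)) (hne : ∀ i, (T i).Nonempty)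
    (hTC : ∀ i, T i ⊆ univ.pi C) : ∃ a, ∀ i, a ∈ closure (T i) := by
  obtain ⟨a, ha⟩ := exists_forall_of_exists_update
    (fun n a => ∀ i, truncate n a ∈ closure (truncate n '' T i))
    (fun n a b hab h i => truncate_congr hab ▸ h i) (a₀ := 0)
    (fun i => by
      obtain ⟨t, ht⟩ := hne i
      exact subset_closure ⟨t, ht, truncate_congr fun _ h => absurd h (Nat.not_lt_zero _)⟩)
    (fun n a h => (hC n).exists_truncate_update_mem_closure hdir hT
      (fun i t ht => hTC i ht n trivial) h)
  exact ⟨a, fun i => mem_closure_of_forall_truncate_mem_closure fun n => ha n i⟩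

end Product

/-- (Tychonoff theorem for convex compactness.) A countable product of
convexly compact subsets of metrizable topological vector spaces is convexly compact in the
product topology. -/
theorem statement14 {X : ℕ → Type*} [∀ n, AddCommGroup (X n)] [∀ n, Module ℝ (X n)]
    [∀ n, TopologicalSpace (X n)] [∀ n, TopologicalSpace.MetrizableSpace (X n)]
    [∀ n, IsTopologicalAddGroup (X n)] [∀ n, ContinuousSMul ℝ (X n)]
    (C : ∀ n, Set (X n)) (hC : ∀ n, ConvexlyCompact (C n)) :
    ConvexlyCompact (Set.univ.pi C) := by
  refine ⟨isClosed_set_pi fun n _ => (hC n).1, convex_pi fun n _ => (hC n).2.1,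
    fun 𝒜 h𝒜 h𝒜e => ?_⟩
  by_contra! hfin
  obtain ⟨F₀, hF₀⟩ : 𝒜.Nonempty := nonempty_iff_ne_empty.2 fun h => by simp [h] at h𝒜e
  let ι := {s : Finset (Set (∀ n, X n)) // ↑s ⊆ 𝒜 ∧ s.Nonempty}
  have hsingleton : ∀ F ∈ 𝒜, ↑({F} : Finset (Set (∀ n, X n))) ⊆ 𝒜 ∧ ({F} : Finset _).Nonempty :=
    fun F hF => ⟨by simpa, Finset.singleton_nonempty F⟩
  have : Nonempty ι := ⟨⟨{F₀}, hsingleton F₀ hF₀⟩⟩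
  obtain ⟨a, ha⟩ := exists_forall_mem_closure_of_directed hC (T := fun s : ι => ⋂₀ ↑s.1)
    (fun s t => ⟨⟨s.1 ∪ t.1, by simpa using ⟨s.2.1, t.2.1⟩, s.2.2.mono Finset.subset_union_left⟩,
      sInter_mono (by simp), sInter_mono (by simp)⟩)
    (fun s => convex_sInter fun F hF => (h𝒜 F (s.2.1 hF)).2.1)
    (fun s => hfin s.1 s.2.1)
    (fun s => by
      obtain ⟨F, hF⟩ := s.2.2
      exact (sInter_subset_of_mem hF).trans (h𝒜 F (s.2.1 hF)).2.2)
  refine (nonempty_iff_ne_empty.1 ⟨a, fun F hF => ?_⟩) h𝒜e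
  simpa [(h𝒜 F hF).1.closure_eq] using ha ⟨{F}, hsingleton F hF⟩
end

section
/- Let X be a real topological vector space, let A, B, C be directed sets, and let {x_α}_{α∈A}, {y_β}_{β∈B}, {z_γ}_{γ∈C} be nets in X. If {y_β}_{β∈B} is a subnet of convex combinations of {x_α}_{α∈A}, and {z_γ}_{γ∈C} is a subnet of convex combinations of {y_β}_{β∈B}, then {z_γ}_{γ∈C} is a subnet of convex combinations of {x_α}_{α∈A}. -/
open Set

/-- `y : B → X` is a subnet of convex combinations of the net `x : A → X` if there is a map
`D` from `B` to the nonempty finite subsets of `A` such that `y b ∈ conv{x a : a ∈ D b}`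
for every `b`, and for every `a : A` there is `b : B` such that `a ≤ a'` for every
`a' ∈ ⋃_{b' ≥ b} D b'`. -/
def SubnetOfConvexCombinations {X : Type*} [AddCommGroup X] [Module ℝ X]
    {A B : Type*} [PartialOrder A] [PartialOrder B]
    (x : A → X) (y : B → X) : Prop :=
  ∃ D : B → Finset A,
    (∀ b, (D b).Nonempty) ∧
    (∀ b, y b ∈ convexHull ℝ (x '' (D b : Set A))) ∧
    ∀ a : A, ∃ b : B, ∀ b' : B, b ≤ b' → ∀ a' ∈ D b', a ≤ a'

theorem convexHull_image_subset_convexHull_image_biUnion {X A B : Type*} [AddCommGroup X]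
    [Module ℝ X] {x : A → X} {y : B → X} {s : Set B} {t : B → Set A}
    (hy : ∀ b ∈ s, y b ∈ convexHull ℝ (x '' t b)) :
    convexHull ℝ (y '' s) ⊆ convexHull ℝ (x '' ⋃ b ∈ s, t b) := by
  refine convexHull_min ?_ (convex_convexHull ℝ _)
  rintro _ ⟨b, hb, rfl⟩
  exact convexHull_mono (image_mono (subset_biUnion_of_mem hb)) (hy b hb)

theorem Finset.biUnion_eventually_ge {A B C : Type*} [DecidableEq A] [Preorder A] [Preorder B]
    [Preorder C] {D : B → Finset A} {E : C → Finset B}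
    (hD : ∀ a : A, ∃ b : B, ∀ b' : B, b ≤ b' → ∀ a' ∈ D b', a ≤ a')
    (hE : ∀ b : B, ∃ c : C, ∀ c' : C, c ≤ c' → ∀ b' ∈ E c', b ≤ b') (a : A) :
    ∃ c : C, ∀ c' : C, c ≤ c' → ∀ a' ∈ (E c').biUnion D, a ≤ a' := by
  obtain ⟨b, hb⟩ := hD a
  obtain ⟨c, hc⟩ := hE b
  refine ⟨c, fun c' hcc' a' ha' => ?_⟩
  obtain ⟨b', hb', ha'⟩ := Finset.mem_biUnion.1 ha'
  exact hb b' (hc c' hcc' b' hb') a' ha'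

theorem statement15_general {X : Type*} [AddCommGroup X] [Module ℝ X]
    {A B C : Type*} [PartialOrder A] [PartialOrder B] [PartialOrder C]
    (x : A → X) (y : B → X) (z : C → X)
    (hyx : SubnetOfConvexCombinations x y) (hzy : SubnetOfConvexCombinations y z) :
    SubnetOfConvexCombinations x z := by
  classical
  obtain ⟨D, hD_nonempty, hD_conv, hD_tail⟩ := hyx
  obtain ⟨E, hE_nonempty, hE_conv, hE_tail⟩ := hzy
  refine ⟨fun c => (E c).biUnion D, fun c => (hE_nonempty c).biUnion fun b _ => hD_nonempty b,
    fun c => ?_, Finset.biUnion_eventually_ge hD_tail hE_tail⟩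
  rw [Finset.coe_biUnion]
  exact convexHull_image_subset_convexHull_image_biUnion (fun b _ => hD_conv b) (hE_conv c)

/-- A subnet of convex combinations of a subnet of convex combinations of
a net `x` is itself a subnet of convex combinations of `x`. -/
theorem statement15 {X : Type*} [AddCommGroup X] [Module ℝ X] [TopologicalSpace X]
    [IsTopologicalAddGroup X] [ContinuousSMul ℝ X]
    {A B C : Type*} [PartialOrder A] [IsDirected A (· ≤ ·)]
    [PartialOrder B] [IsDirected B (· ≤ ·)] [PartialOrder C] [IsDirected C (· ≤ ·)]
    (x : A → X) (y : B → X) (z : C → X)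
    (hyx : SubnetOfConvexCombinations x y) (hzy : SubnetOfConvexCombinations y z) :
    SubnetOfConvexCombinations x z :=
  statement15_general x y z hyx hzy
end
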